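/- arXiv:1407.1746 — 8 statements merged into one kernel-verified Lean document; each statement's English description precedes it below -/
import Mathlib

section
/- For every δ ∈ (0,1) there exists N₀ such that for every integer n′ ≥ N₀ the following holds. Set t = ⌊(log n′)^{1−δ}⌋, n = ⌊n′/t⌋ · t, β = ⌊log n⌋, α = (log n)³ (natural logarithms), and ε = max{ (1 − 2/β)^{−1} · (1 − β/α)^{−2t} − 1, (n/(n−1)) · (2α²/n²) · (2t)^{2t} }. Define w_k for k = 1, ..., n by w_β = (1+ε)n/((n−1)β); w_k = εt/(jn) if k = j·n/t for some j ∈ {1, ..., t}; and w_k = 0 otherwise. Then for all real numbers r_1, ..., r_t ∈ [1, n]: Σ_{k=1}^{n} w_k · (k − 2) · Π_{i=1}^{t} (r_i − k)² ≥ (1 + 1/(n−1)) · Π_{i=1}^{t} r_i². -/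
/-!
Every term of the sum is nonnegative, so it suffices to find a single term that dominates
`n/(n-1) · ∏ rᵢ²`. If all roots are at least `A`, the term `k = β` does: each factor
`(rᵢ - β)²` is at least `(1 - β/A)² rᵢ²`, and the first part of `ε` pays for the loss
`(1 - 2/β)(1 - β/A)^{2t}`. Otherwise some root `r_{i₀}` is below `A ≤ m/2`, where `m = n/t`.
Each of the other `t - 1` roots lies within `m/2` of at most one of the `t` points `j·m`, so one
of these points is at distance at least `m/2 ≥ rᵢ/(2t)` from all of them, and at distance at
least `m/2 ≥ (m/(2A)) r_{i₀}` from `r_{i₀}`; the second part of `ε` pays for these losses.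
-/

open Real Finset Filter

section Products

variable {ι : Type*} [Fintype ι]

theorem pow_card_mul_prod_sq_le_prod_sq_sub {A b : ℝ} (hA : 0 < A) (hb : 0 ≤ b) (hbA : b ≤ A)
    {r : ι → ℝ} (hr : ∀ i, A ≤ r i) :
    (1 - b / A) ^ (2 * Fintype.card ι) * ∏ i, r i ^ 2 ≤ ∏ i, (r i - b) ^ 2 := by
  rw [pow_mul, ← Finset.card_univ, ← prod_const, ← prod_mul_distrib]
  refine prod_le_prod (fun i _ => by positivity) fun i _ => ?_
  have hbA' : b / A ≤ 1 := div_le_one_of_le₀ hbA hA.le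
  have hb_le : b ≤ b / A * r i :=
    calc b = b / A * A := (div_mul_cancel₀ b hA.ne').symm
      _ ≤ b / A * r i := mul_le_mul_of_nonneg_left (hr i) (by positivity)
  rw [← mul_pow]
  exact pow_le_pow_left₀ (mul_nonneg (by linarith) (hA.le.trans (hr i))) (by linarith) 2

theorem mul_mul_pow_mul_prod_le_prod [DecidableEq ι] {f g : ι → ℝ} {a c : ℝ} (i₀ : ι)
    (ha : 0 ≤ a) (hc : 0 ≤ c) (hf : ∀ i, 0 ≤ f i) (h₀ : a * f i₀ ≤ g i₀)
    (h : ∀ i ≠ i₀, c * f i ≤ g i) :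
    a * c ^ (Fintype.card ι - 1) * ∏ i, f i ≤ ∏ i, g i := by
  have hcard : #(univ.erase i₀) = Fintype.card ι - 1 := by
    rw [card_erase_of_mem (mem_univ i₀), card_univ]
  rw [← mul_prod_erase univ f (mem_univ i₀), ← mul_prod_erase univ g (mem_univ i₀), ← hcard,
    ← prod_const, mul_mul_mul_comm, ← prod_mul_distrib]
  refine mul_le_mul h₀ (prod_le_prod (fun i _ => mul_nonneg hc (hf i)) fun i hi => ?_)
    (prod_nonneg fun i _ => mul_nonneg hc (hf i)) ((mul_nonneg ha (hf i₀)).trans h₀)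
  exact h i (ne_of_mem_erase hi)

theorem sq_mul_pow_mul_prod_sq_le_prod_sq_sub [DecidableEq ι] {r : ι → ℝ} {x a c : ℝ} (i₀ : ι)
    (ha : 0 ≤ a) (hc : 0 ≤ c) (hr : ∀ i, 0 ≤ r i) (h₀ : a * r i₀ ≤ |r i₀ - x|)
    (h : ∀ i ≠ i₀, c * r i ≤ |r i - x|) :
    a ^ 2 * (c ^ 2) ^ (Fintype.card ι - 1) * ∏ i, r i ^ 2 ≤ ∏ i, (r i - x) ^ 2 := by
  have hsq {b : ℝ} (hb : 0 ≤ b) {i : ι} (hi : b * r i ≤ |r i - x|) :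
      b ^ 2 * r i ^ 2 ≤ (r i - x) ^ 2 := by
    rw [← mul_pow, ← sq_abs (r i - x)]
    exact pow_le_pow_left₀ (mul_nonneg hb (hr i)) hi 2
  exact mul_mul_pow_mul_prod_le_prod i₀ (sq_nonneg a) (sq_nonneg c) (fun i => sq_nonneg (r i))
    (hsq ha h₀) fun i hi => hsq hc (h i hi)

end Products

theorem exists_mem_Icc_forall_half_le_abs_sub {ι : Type*} (s : Finset ι) {t : ℕ} (hs : #s < t)
    (r : ι → ℝ) {m : ℝ} (hm : 0 < m) : ∃ j ∈ Icc 1 t, ∀ i ∈ s, m / 2 ≤ |r i - j * m| := by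
  by_contra! hbad
  have hsub : Icc 1 t ⊆ s.image fun i => (round (r i / m)).toNat := by
    intro j hj
    obtain ⟨i, hi, hij⟩ := hbad j hj
    refine mem_image.2 ⟨i, hi, ?_⟩
    have hround : round (r i / m) = j := by
      rw [round_eq_iff, Set.mem_Ico, Int.cast_natCast, le_div_iff₀ hm, div_lt_iff₀ hm]
      constructor <;> linarith [abs_lt.1 hij]
    simp [hround]
  have hcard := (card_le_card hsub).trans card_image_le
  rw [Nat.card_Icc, add_tsub_cancel_right] at hcard
  omega

noncomputable def knapsackWeight (n t β : ℕ) (ε : ℝ) (k : ℕ) : ℝ :=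
  if k = β then (1 + ε) * (n : ℝ) / (((n : ℝ) - 1) * (β : ℝ))
  else if k ≠ 0 ∧ (n / t) ∣ k then ε * (t : ℝ) / (((k / (n / t) : ℕ) : ℝ) * (n : ℝ))
  else 0

noncomputable def knapsackTerm (n t β : ℕ) (ε : ℝ) (r : Fin t → ℝ) (k : ℕ) : ℝ :=
  knapsackWeight n t β ε k * ((k : ℝ) - 2) * ∏ i, (r i - k) ^ 2

section Knapsack

variable {n m t β : ℕ} {A ε : ℝ}

theorem knapsackWeight_self : knapsackWeight n t β ε β = (1 + ε) * n / ((n - 1) * β) :=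
  if_pos rfl

theorem knapsackWeight_mul {j : ℕ} (hn : n = m * t) (ht : 0 < t) (hj : 0 < j) (hβm : β < m) :
    knapsackWeight n t β ε (j * m) = ε * t / (j * n) := by
  have hm : n / t = m := by rw [hn, Nat.mul_div_cancel m ht]
  have hjm : j * m ≠ β := by nlinarith
  have hm0 : 0 < m := by omega
  rw [knapsackWeight, if_neg hjm, if_pos ⟨(Nat.mul_pos hj hm0).ne', hm ▸ dvd_mul_left m j⟩, hm,
    Nat.mul_div_cancel j hm0]

theorem knapsackTerm_nonneg (hn : 1 ≤ n) (hβ : 2 ≤ β) (hm : 2 ≤ n / t) (hε : 0 ≤ ε)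
    (r : Fin t → ℝ) (k : ℕ) : 0 ≤ knapsackTerm n t β ε r k := by
  have hn' : (0 : ℝ) ≤ n - 1 := by rw [sub_nonneg]; exact_mod_cast hn
  refine mul_nonneg ?_ (prod_nonneg fun i _ => sq_nonneg _)
  unfold knapsackWeight
  split_ifs with hkβ hkm
  · subst hkβ
    have : (2 : ℝ) ≤ k := by exact_mod_cast hβ
    exact mul_nonneg (by positivity) (by linarith)
  · have : (2 : ℝ) ≤ k := by exact_mod_cast hm.trans (Nat.le_of_dvd (by omega) hkm.2)
    exact mul_nonneg (by positivity) (by linarith)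
  · simp

theorem half_le_knapsackWeight_mul_mul_sub_two {j : ℕ} (hn : n = m * t) (ht : 0 < t)
    (hj : 1 ≤ j) (hβm : β < m) (hm : 4 ≤ m) (hε : 0 ≤ ε) :
    ε / 2 ≤ knapsackWeight n t β ε (j * m) * ((j * m : ℕ) - 2) := by
  have hnR : (n : ℝ) = m * t := by exact_mod_cast hn
  have hm' : (4 : ℝ) ≤ m := by exact_mod_cast hm
  have hj' : (1 : ℝ) ≤ j := by exact_mod_cast hj
  have ht' : (0 : ℝ) < t := by exact_mod_cast ht
  have hhalf : 1 / 2 ≤ t / (j * n) * ((j * m : ℕ) - 2 : ℝ) := by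
    rw [hnR, div_mul_eq_mul_div, le_div_iff₀ (by positivity)]
    push_cast
    nlinarith
  rw [knapsackWeight_mul hn ht hj hβm]
  calc ε / 2 = ε * (1 / 2) := by ring
    _ ≤ ε * (t / (j * n) * ((j * m : ℕ) - 2 : ℝ)) := by gcongr
    _ = _ := by ring

theorem le_knapsackTerm_self (hβ : 2 < β) (hβA : β < A) (hn : 1 < n)
    (hε : (1 - 2 / (β : ℝ))⁻¹ * ((1 - β / A) ^ (2 * t))⁻¹ - 1 ≤ ε) {r : Fin t → ℝ}
    (hr : ∀ i, A ≤ r i) :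
    n / (n - 1) * ∏ i, r i ^ 2 ≤ knapsackTerm n t β ε r β := by
  have hβ' : (2 : ℝ) < β := by exact_mod_cast hβ
  have hn' : (1 : ℝ) < n := by exact_mod_cast hn
  have hA : 0 < A := by linarith
  set c := (1 - β / A) ^ (2 * t)
  have hc_pos : 0 < c := pow_pos (by rw [sub_pos, div_lt_one hA]; exact hβA) _
  have hβ_pos : 0 < 1 - 2 / (β : ℝ) := by rw [sub_pos, div_lt_one (by linarith)]; exact hβ'
  have hprod : c * ∏ i, r i ^ 2 ≤ ∏ i, (r i - β) ^ 2 := by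
    simpa using pow_card_mul_prod_sq_le_prod_sq_sub hA (Nat.cast_nonneg β) hβA.le hr
  have hone : 1 ≤ (1 + ε) * ((1 - 2 / β) * c) := by
    rw [← inv_le_iff_one_le_mul₀ (mul_pos hβ_pos hc_pos), mul_inv]
    linarith
  have hε_pos : 0 < 1 + ε := by nlinarith [mul_pos hβ_pos hc_pos]
  have hweight :
      knapsackWeight n t β ε β * (β - 2) = (1 + ε) * (1 - 2 / β) * (n / (n - 1)) := by
    rw [knapsackWeight_self]
    field_simp
  calc n / (n - 1) * ∏ i, r i ^ 2
      ≤ (1 + ε) * ((1 - 2 / β) * c) * (n / (n - 1) * ∏ i, r i ^ 2) :=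
        le_mul_of_one_le_left (by positivity) hone
    _ = knapsackWeight n t β ε β * (β - 2) * (c * ∏ i, r i ^ 2) := by rw [hweight]; ring
    _ ≤ knapsackTerm n t β ε r β :=
        mul_le_mul_of_nonneg_left hprod (by rw [hweight]; positivity)

theorem knapsack_error_mul_loss_eq (hn : n = m * t) (ht : 0 < t) (hA : A ≠ 0) :
    n / (n - 1) * (2 * A ^ 2 / n ^ 2) * (2 * (t : ℝ)) ^ (2 * t) / 2 *
      ((m / (2 * A)) ^ 2 * ((1 / (2 * t)) ^ 2) ^ (t - 1)) = n / (n - 1) := by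
  have ht' : (t : ℝ) ≠ 0 := by exact_mod_cast ht.ne'
  have hpow : (2 * (t : ℝ)) ^ (2 * t) * ((1 / (2 * t)) ^ 2) ^ (t - 1) = (2 * t) ^ 2 := by
    rw [show 2 * t = 2 * (t - 1) + 2 by omega, pow_add, pow_mul, mul_right_comm, ← mul_pow,
      ← mul_pow, mul_one_div_cancel (by positivity), one_pow, one_pow, one_mul]
  calc _ = n / (n - 1) * (A ^ 2 / n ^ 2 * (m / (2 * A)) ^ 2) *
        ((2 * (t : ℝ)) ^ (2 * t) * ((1 / (2 * t)) ^ 2) ^ (t - 1)) := by ring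
    _ = n / (n - 1) := by
      rw [hpow, show (n : ℝ) = m * t by exact_mod_cast hn]
      field_simp

theorem exists_le_knapsackTerm_mul (hn : n = m * t) (ht : 0 < t) (hβm : β < m) (hA : 2 ≤ A)
    (hAm : 2 * A ≤ m) (hε : n / (n - 1) * (2 * A ^ 2 / n ^ 2) * (2 * (t : ℝ)) ^ (2 * t) ≤ ε)
    {r : Fin t → ℝ} (hr : ∀ i, 0 ≤ r i ∧ r i ≤ n) {i₀ : Fin t} (hi₀ : r i₀ ≤ A) :
    ∃ j ∈ Icc 1 t, n / (n - 1) * ∏ i, r i ^ 2 ≤ knapsackTerm n t β ε r (j * m) := by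
  have hnR : (n : ℝ) = m * t := by exact_mod_cast hn
  have ht' : (1 : ℝ) ≤ t := by exact_mod_cast ht
  have hm : (4 : ℝ) ≤ m := by linarith
  have hn0 : (0 : ℝ) ≤ n - 1 := by rw [hnR]; nlinarith
  have hε₀ : 0 ≤ ε := le_trans (by positivity) hε
  obtain ⟨j, hj, hfar⟩ := exists_mem_Icc_forall_half_le_abs_sub (univ.erase i₀) (t := t)
    (by rw [card_erase_of_mem (mem_univ i₀), card_univ, Fintype.card_fin]; omega) r
    (show (0 : ℝ) < m by linarith)
  have hj1 : (1 : ℝ) ≤ j := by exact_mod_cast (mem_Icc.1 hj).1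
  have hfar₀ : m / (2 * A) * r i₀ ≤ |r i₀ - (j * m : ℕ)| :=
    calc m / (2 * A) * r i₀ ≤ m / (2 * A) * A := by gcongr
      _ = m / 2 := by field_simp
      _ ≤ |r i₀ - (j * m : ℕ)| := by push_cast; exact le_abs.2 (Or.inr (by nlinarith))
  have hfar_of_ne (i : Fin t) (hi : i ≠ i₀) : 1 / (2 * t) * r i ≤ |r i - (j * m : ℕ)| :=
    calc 1 / (2 * t) * r i ≤ 1 / (2 * t) * n := by gcongr; exact (hr i).2
      _ = m / 2 := by rw [hnR]; field_simp
      _ ≤ |r i - (j * m : ℕ)| := by push_cast; exact hfar i (mem_erase.2 ⟨hi, mem_univ i⟩)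
  have hprod := sq_mul_pow_mul_prod_sq_le_prod_sq_sub i₀ (by positivity) (by positivity)
    (fun i => (hr i).1) hfar₀ hfar_of_ne
  rw [Fintype.card_fin] at hprod
  refine ⟨j, hj, ?_⟩
  calc n / (n - 1) * ∏ i, r i ^ 2
      = n / (n - 1) * (2 * A ^ 2 / n ^ 2) * (2 * (t : ℝ)) ^ (2 * t) / 2 *
          ((m / (2 * A)) ^ 2 * ((1 / (2 * t)) ^ 2) ^ (t - 1)) * ∏ i, r i ^ 2 := by
        rw [knapsack_error_mul_loss_eq hn ht (by linarith)]
    _ ≤ ε / 2 * ∏ i, (r i - (j * m : ℕ)) ^ 2 := by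
        rw [mul_assoc]
        gcongr
    _ ≤ knapsackTerm n t β ε r (j * m) :=
        mul_le_mul_of_nonneg_right
          (half_le_knapsackWeight_mul_mul_sub_two hn ht (mem_Icc.1 hj).1 hβm
            (by exact_mod_cast hm) hε₀)
          (prod_nonneg fun i _ => sq_nonneg _)

theorem le_sum_knapsackTerm (hn : n = m * t) (ht : 0 < t) (hβ : 2 < β) (hβA : β < A)
    (hAm : 2 * A ≤ m) (hε₁ : (1 - 2 / (β : ℝ))⁻¹ * ((1 - β / A) ^ (2 * t))⁻¹ - 1 ≤ ε)
    (hε₂ : n / (n - 1) * (2 * A ^ 2 / n ^ 2) * (2 * (t : ℝ)) ^ (2 * t) ≤ ε)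
    {r : Fin t → ℝ} (hr : ∀ i, 0 ≤ r i ∧ r i ≤ n) :
    (1 + 1 / ((n : ℝ) - 1)) * ∏ i, r i ^ 2 ≤ ∑ k ∈ Icc 1 n, knapsackTerm n t β ε r k := by
  have hβ' : (2 : ℝ) < β := by exact_mod_cast hβ
  have hβm : β < m := by exact_mod_cast (hβA.trans_le (by linarith) : (β : ℝ) < m)
  have hmn : m ≤ n := hn ▸ Nat.le_mul_of_pos_right m ht
  have hn1 : (1 : ℝ) < n := by exact_mod_cast (show 1 < n by omega)
  have hn0 : (0 : ℝ) ≤ n - 1 := by linarith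
  have hterm : ∀ k ∈ Icc 1 n, 0 ≤ knapsackTerm n t β ε r k := fun k _ =>
    knapsackTerm_nonneg (by omega) hβ.le (by rw [hn, Nat.mul_div_cancel m ht]; omega)
      (le_trans (by positivity) hε₂) r k
  rw [one_add_div (by linarith), sub_add_cancel]
  by_cases hlarge : ∀ i, A ≤ r i
  · exact (le_knapsackTerm_self hβ hβA (by omega) hε₁ hlarge).trans
      (single_le_sum hterm (mem_Icc.2 ⟨by omega, by omega⟩))
  · push Not at hlarge
    obtain ⟨i₀, hi₀⟩ := hlarge
    obtain ⟨j, hj, hle⟩ := exists_le_knapsackTerm_mul hn ht hβm (by linarith) hAm hε₂ hr hi₀.le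
    obtain ⟨hj1, hjt⟩ := mem_Icc.1 hj
    refine hle.trans (single_le_sum hterm (mem_Icc.2 ⟨by nlinarith, ?_⟩))
    rw [hn, mul_comm m]
    exact Nat.mul_le_mul_right m hjt

end Knapsack

theorem eventually_three_le_log_and_three_mul_log_pow_four_le :
    ∀ᶠ x : ℕ in atTop, 3 ≤ log x ∧ 3 * log x ^ 4 ≤ x := by
  have hlog : Tendsto (fun x : ℕ => log x) atTop atTop :=
    tendsto_log_atTop.comp tendsto_natCast_atTop_atTop
  have hpow := (isLittleO_pow_log_id_atTop (n := 4)).bound (show (0 : ℝ) < 1 / 3 by norm_num)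
  filter_upwards [hlog.eventually_ge_atTop 3,
    tendsto_natCast_atTop_atTop.eventually (hpow.and (eventually_ge_atTop 1))]
    with x hx ⟨hbound, hx1⟩
  refine ⟨hx, ?_⟩
  rw [norm_pow, Real.norm_eq_abs, abs_of_nonneg (by linarith), id, Real.norm_eq_abs,
    abs_of_nonneg (by linarith)] at hbound
  linarith

theorem one_le_floor_rpow {L e : ℝ} (hL : 1 ≤ L) (he : 0 ≤ e) : 1 ≤ ⌊L ^ e⌋₊ :=
  Nat.le_floor (by exact_mod_cast one_le_rpow hL he)

theorem floor_rpow_le_self {L e : ℝ} (hL : 1 ≤ L) (he : e ≤ 1) : (⌊L ^ e⌋₊ : ℝ) ≤ L :=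
  (Nat.floor_le (by positivity)).trans (rpow_le_self_of_one_le hL he)

theorem lt_div_add_one_of_mul_le {a L : ℝ} {n t : ℕ} (ht : 0 < t) (htL : (t : ℝ) ≤ L)
    (h : L * a ≤ n) : a < (n / t : ℕ) + 1 := by
  have hn : n < (n / t + 1) * t := by rw [add_one_mul]; exact Nat.lt_div_mul_add ht
  have hn' : (n : ℝ) < ((n / t : ℕ) + 1) * t := by exact_mod_cast hn
  have hL : 0 < L := lt_of_lt_of_le (by exact_mod_cast ht) htL
  refine lt_of_mul_lt_mul_left (a := L) ?_ hL.le
  nlinarith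

theorem knapsack_parameters_of_log_bounds {δ : ℝ} (hδ0 : 0 ≤ δ) (hδ1 : δ ≤ 1)
    {n' t n β : ℕ} {A : ℝ} (hlog : 3 ≤ log n') (hn' : 3 * log n' ^ 4 ≤ n')
    (ht : t = ⌊log n' ^ (1 - δ)⌋₊) (hn : n = n' / t * t) (hβ : β = ⌊log n⌋₊)
    (hA : A = log n ^ 3) :
    0 < t ∧ 2 < β ∧ (β : ℝ) < A ∧ 2 * A ≤ (n' / t : ℕ) := by
  set L := log n'
  have ht0 : 0 < t := ht ▸ one_le_floor_rpow (by linarith) (by linarith)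
  have htL : (t : ℝ) ≤ L := ht ▸ floor_rpow_le_self (by linarith) (by linarith)
  have hm : 3 * L ^ 3 < (n' / t : ℕ) + 1 := lt_div_add_one_of_mul_le ht0 htL (by linarith)
  have hL3 : 27 ≤ L ^ 3 :=
    calc (27 : ℝ) = 3 ^ 3 := by norm_num
      _ ≤ L ^ 3 := pow_le_pow_left₀ (by norm_num) hlog 3
  have hn27 : (27 : ℝ) ≤ n := by
    have : (1 : ℝ) ≤ t := by exact_mod_cast ht0
    rw [hn]; push_cast; nlinarith
  have hlogn : 3 ≤ log n := by
    have hexp : exp 3 ≤ 3 ^ 3 :=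
      calc exp 3 = exp 1 ^ 3 := by rw [← exp_nat_mul]; norm_num
        _ ≤ 3 ^ 3 := pow_le_pow_left₀ (exp_pos 1).le exp_one_lt_three.le 3
    rw [le_log_iff_exp_le (by linarith)]
    linarith
  have hlognL : log n ≤ L :=
    log_le_log (by linarith) (by exact_mod_cast hn ▸ Nat.div_mul_le_self n' t)
  have hβlog : (β : ℝ) ≤ log n := hβ ▸ Nat.floor_le (by linarith)
  refine ⟨ht0, hβ ▸ Nat.le_floor (by exact_mod_cast hlogn), ?_, ?_⟩
  · rw [hA]
    exact hβlog.trans_lt (lt_self_pow₀ (by linarith) (by norm_num))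
  · have : log n ^ 3 ≤ L ^ 3 := pow_le_pow_left₀ (by linarith) hlognL 3
    rw [hA]
    linarith

/-- root-form inequality for the Min-Knapsack SoS solution: for all roots
`r_1, ..., r_t ∈ [1, n]`, `Σ_k w_k (k-2) Π (r_i-k)² ≥ (1 + 1/(n-1)) Π r_i²`. -/
theorem stmt5 (δ : ℝ) (hδ0 : 0 < δ) (hδ1 : δ < 1) :
    ∃ N₀ : ℕ, ∀ n' : ℕ, N₀ ≤ n' →
    ∀ t n β : ℕ, ∀ A ε : ℝ,
    t = ⌊(Real.log n') ^ (1 - δ)⌋₊ →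
    n = (n' / t) * t →
    β = ⌊Real.log n⌋₊ →
    A = (Real.log n) ^ 3 →
    ε = max ((1 - 2 / (β : ℝ))⁻¹ * ((1 - (β : ℝ) / A) ^ (2 * t))⁻¹ - 1)
          (((n : ℝ) / ((n : ℝ) - 1)) * (2 * A ^ 2 / (n : ℝ) ^ 2) * (2 * (t : ℝ)) ^ (2 * t)) →
    ∀ w : ℕ → ℝ,
    (∀ k : ℕ, w k = if k = β then (1 + ε) * (n : ℝ) / (((n : ℝ) - 1) * (β : ℝ))
        else if k ≠ 0 ∧ (n / t) ∣ k then ε * (t : ℝ) / (((k / (n / t) : ℕ) : ℝ) * (n : ℝ))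
        else 0) →
    ∀ r : Fin t → ℝ, (∀ i : Fin t, 1 ≤ r i ∧ r i ≤ (n : ℝ)) →
      (1 + 1 / ((n : ℝ) - 1)) * ∏ i : Fin t, (r i) ^ 2 ≤
        ∑ k ∈ Finset.Icc 1 n, w k * ((k : ℝ) - 2) * ∏ i : Fin t, (r i - (k : ℝ)) ^ 2 := by
  obtain ⟨N₀, hN₀⟩ := eventually_atTop.1 eventually_three_le_log_and_three_mul_log_pow_four_le
  refine ⟨N₀, fun n' hn' t n β A ε ht hn hβ hA hε w hw r hr => ?_⟩
  obtain ⟨ht0, hβ2, hβA, hAm⟩ := knapsack_parameters_of_log_bounds hδ0.le hδ1.le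
    (hN₀ n' hn').1 (hN₀ n' hn').2 ht hn hβ hA
  obtain rfl : w = knapsackWeight n t β ε := funext hw
  exact le_sum_knapsackTerm hn ht0 hβ2 hβA hAm (hε ▸ le_max_left _ _) (hε ▸ le_max_right _ _)
    fun i => ⟨zero_le_one.trans (hr i).1, (hr i).2⟩
end

section
/- Fix δ ∈ (0,1). For each integer n′ ≥ 3 set t(n′) = ⌊(log n′)^{1−δ}⌋, n(n′) = ⌊n′/t(n′)⌋ · t(n′), β = ⌊log n⌋, α = (log n)³ (natural logarithms), and ε(n′) = max{ (1 − 2/β)^{−1} · (1 − β/α)^{−2t} − 1, (n/(n−1)) · (2α²/n²) · (2t)^{2t} }. Then ε(n′) · t(n′) → 0 as n′ → ∞; in other words, ε = o(t^{−1}). -/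
/-!
Write `L = log n'`. Since `t ≤ L ^ (1 - δ) = o(L)`, we have `n ≥ n' / 2` and `log n ≍ L`,
so `β ≍ L` while `β / A ≤ 1 / (log n) ^ 2`. Bernoulli's inequality then makes the first term
of the maximum `O(1 / L + t / L ^ 2)`, i.e. `O(t / L + (t / L) ^ 2) = O(L ^ (-δ))` after
multiplying by `t`. For the second term, `2 t log (2 t) ≤ 4 L ^ (1 - δ) log L ≤ L / 2`, so
`(2 t) ^ (2 t) ≤ √n'`; the remaining factor is `O(L ^ 7 / n' ^ 2)` and the product is
`O(1 / n')`.
-/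

open Filter Real Topology Asymptotics

/-- The `ε` of the statement, with `t` left as a parameter. -/
noncomputable def knapsackEps (n' t : ℕ) : ℝ :=
  let n : ℕ := n' / t * t
  let β : ℕ := ⌊log n⌋₊
  let A : ℝ := log n ^ 3
  max ((1 - 2 / (β : ℝ))⁻¹ * ((1 - (β : ℝ) / A) ^ (2 * t))⁻¹ - 1)
    ((n : ℝ) / ((n : ℝ) - 1) * (2 * A ^ 2 / (n : ℝ) ^ 2) * (2 * (t : ℝ)) ^ (2 * t))

lemma inv_one_sub_le_one_add_two_mul {u : ℝ} (h0 : 0 ≤ u) (h : u ≤ 1 / 2) :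
    (1 - u)⁻¹ ≤ 1 + 2 * u := by
  rw [inv_le_iff_one_le_mul₀ (by linarith)]
  nlinarith

lemma inv_one_sub_pow_le {x : ℝ} (m : ℕ) (h0 : 0 ≤ x) (h : m * x ≤ 1 / 2) :
    ((1 - x) ^ m)⁻¹ ≤ 1 + 2 * m * x := by
  rcases Nat.eq_zero_or_pos m with rfl | hm
  · simp
  have hx : x ≤ 2 := by
    have : (1 : ℝ) ≤ m := by exact_mod_cast hm
    nlinarith
  have bernoulli : 1 - m * x ≤ (1 - x) ^ m := by
    simpa [sub_eq_add_neg] using one_add_mul_le_pow (by linarith : (-2 : ℝ) ≤ -x) m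
  calc ((1 - x) ^ m)⁻¹ ≤ (1 - m * x)⁻¹ := inv_anti₀ (by linarith) bernoulli
    _ ≤ 1 + 2 * (m * x) := inv_one_sub_le_one_add_two_mul (by positivity) h
    _ = 1 + 2 * m * x := by ring

lemma first_term_le {l : ℝ} {t : ℕ} (hl : 8 ≤ l) (ht : 4 * t ≤ l ^ 2) :
    (1 - 2 / (⌊l⌋₊ : ℝ))⁻¹ * ((1 - (⌊l⌋₊ : ℝ) / l ^ 3) ^ (2 * t))⁻¹ - 1
      ≤ 8 / l + 8 * t / l ^ 2 := by
  set β : ℝ := (⌊l⌋₊ : ℝ)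
  have hβl : β ≤ l := Nat.floor_le (by linarith)
  have hlβ : l / 2 ≤ β := by linarith [Nat.sub_one_lt_floor l]
  have hu : (1 - 2 / β)⁻¹ ≤ 1 + 8 / l := by
    have h2β : 2 / β ≤ 4 / l := by
      rw [div_le_div_iff₀ (by linarith) (by linarith)]; linarith
    have h4l : 4 / l ≤ 1 / 2 := by
      rw [div_le_div_iff₀ (by linarith) (by norm_num)]; linarith
    calc (1 - 2 / β)⁻¹ ≤ 1 + 2 * (2 / β) :=
          inv_one_sub_le_one_add_two_mul (by positivity) (h2β.trans h4l)
      _ ≤ 1 + 2 * (4 / l) := by gcongr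
      _ = 1 + 8 / l := by ring
  have hx : β / l ^ 3 ≤ 1 / l ^ 2 := by
    rw [div_le_div_iff₀ (by positivity) (by positivity)]; nlinarith [sq_nonneg l]
  have htx : ((2 * t : ℕ) : ℝ) * (β / l ^ 3) ≤ 2 * t / l ^ 2 := by
    push_cast
    calc 2 * (t : ℝ) * (β / l ^ 3) ≤ 2 * t * (1 / l ^ 2) := by gcongr
      _ = 2 * t / l ^ 2 := by ring
  have hv : ((1 - β / l ^ 3) ^ (2 * t))⁻¹ ≤ 1 + 4 * t / l ^ 2 := by
    have hm : 2 * (t : ℝ) / l ^ 2 ≤ 1 / 2 := by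
      rw [div_le_div_iff₀ (by positivity) (by norm_num)]; linarith
    calc ((1 - β / l ^ 3) ^ (2 * t))⁻¹ ≤ 1 + 2 * (((2 * t : ℕ) : ℝ) * (β / l ^ 3)) := by
          rw [← mul_assoc]; exact inv_one_sub_pow_le _ (by positivity) (htx.trans hm)
      _ ≤ 1 + 2 * (2 * t / l ^ 2) := by gcongr
      _ = 1 + 4 * t / l ^ 2 := by ring
  have hv0 : 0 ≤ ((1 - β / l ^ 3) ^ (2 * t))⁻¹ := by
    have : β / l ^ 3 ≤ 1 := hx.trans (div_le_one_of_le₀ (by nlinarith) (by positivity))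
    exact inv_nonneg.2 (pow_nonneg (by linarith) _)
  have huv : 8 / l * (4 * t / l ^ 2) ≤ 4 * t / l ^ 2 :=
    mul_le_of_le_one_left (by positivity) (div_le_one_of_le₀ hl (by linarith))
  calc (1 - 2 / β)⁻¹ * ((1 - β / l ^ 3) ^ (2 * t))⁻¹ - 1
      ≤ (1 + 8 / l) * (1 + 4 * t / l ^ 2) - 1 := by
        gcongr (?_ : ℝ) - 1; exact mul_le_mul hu hv hv0 (by positivity)
    _ = 8 / l + 4 * t / l ^ 2 + 8 / l * (4 * t / l ^ 2) := by ring
    _ ≤ 8 / l + 4 * t / l ^ 2 + 4 * t / l ^ 2 := by gcongr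
    _ = 8 / l + 8 * t / l ^ 2 := by ring

lemma pow_two_mul_self_le_exp {t : ℕ} {c : ℝ} (h : 2 * t * log (2 * t) ≤ c) :
    (2 * (t : ℝ)) ^ (2 * t) ≤ exp c := by
  rcases Nat.eq_zero_or_pos t with rfl | ht
  · simpa using one_le_exp (by simpa using h)
  rw [← log_le_iff_le_exp (by positivity), log_pow]
  push_cast
  exact h

lemma two_mul_log_two_mul_le {δ L : ℝ} {t : ℕ} (hL : 2 ≤ L) (htL : (t : ℝ) ≤ L)
    (htδ : (t : ℝ) ≤ L ^ (1 - δ)) (hlog : log L ≤ L ^ δ / 8) :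
    2 * t * log (2 * t) ≤ L / 2 := by
  have hlog2t : log (2 * t) ≤ 2 * log L := by
    rcases Nat.eq_zero_or_pos t with rfl | ht
    · simpa using log_nonneg (by linarith : (1 : ℝ) ≤ L)
    calc log (2 * t) ≤ log (2 * L) := log_le_log (by positivity) (by linarith)
      _ = log 2 + log L := log_mul (by norm_num) (by positivity)
      _ ≤ 2 * log L := by linarith [log_le_log (by norm_num) hL]
  have hsplit : L ^ (1 - δ) * L ^ δ = L := by
    rw [← rpow_add (by positivity), sub_add_cancel, rpow_one]
  calc 2 * t * log (2 * t) ≤ 2 * L ^ (1 - δ) * (2 * (L ^ δ / 8)) := by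
        gcongr
        · simpa using log_natCast_nonneg (2 * t)
        · exact hlog2t.trans (by linarith)
    _ = L ^ (1 - δ) * L ^ δ / 2 := by ring
    _ = L / 2 := by rw [hsplit]

lemma half_le_div_mul {a t : ℕ} (ht : 0 < t) (h : 2 * t ≤ a) :
    (a : ℝ) / 2 ≤ (a / t * t : ℕ) := by
  have := Nat.lt_div_mul_add (a := a) ht
  rw [div_le_iff₀ two_pos]
  exact_mod_cast (by omega : a ≤ a / t * t * 2)

lemma knapsackEps_nonneg (n' t : ℕ) : 0 ≤ knapsackEps n' t := by
  refine le_max_of_le_right (mul_nonneg (mul_nonneg ?_ (by positivity)) (by positivity))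
  rcases Nat.eq_zero_or_pos (n' / t * t) with h | h
  · simp [h]
  · exact div_nonneg (by positivity) (by simpa using (Nat.one_le_cast.2 h : (1 : ℝ) ≤ _))

lemma div_mul_bounds {n' t : ℕ} (ht : 0 < t) (hL : 2 ≤ log n') (htL : (t : ℝ) ≤ log n')
    (hLn' : log n' ≤ n' / 2) :
    (n' : ℝ) / 2 ≤ (n' / t * t : ℕ) ∧ log n' / 2 ≤ log (n' / t * t : ℕ) ∧
      log (n' / t * t : ℕ) ≤ log n' := by
  have hn'0 : (0 : ℝ) < n' := by
    rcases Nat.eq_zero_or_pos n' with h | h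
    · simp [h] at hL; linarith
    · exact_mod_cast h
  have hhalf : (n' : ℝ) / 2 ≤ (n' / t * t : ℕ) :=
    half_le_div_mul ht (by exact_mod_cast (by linarith : 2 * (t : ℝ) ≤ n'))
  have hle : ((n' / t * t : ℕ) : ℝ) ≤ n' := by exact_mod_cast Nat.div_mul_le_self n' t
  refine ⟨hhalf, ?_, log_le_log (by linarith) hle⟩
  calc log n' / 2 ≤ log n' - log 2 := by linarith [log_two_lt_d9]
    _ = log ((n' : ℝ) / 2) := (log_div hn'0.ne' two_ne_zero).symm
    _ ≤ log (n' / t * t : ℕ) := log_le_log (by positivity) hhalf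

lemma knapsackEps_mul_le {n' t : ℕ} (hL : 16 ≤ log n') (htL : (t : ℝ) ≤ log n')
    (hLn' : log n' ≤ n' / 2) (hL7 : log n' ^ 7 ≤ exp (log n' / 2))
    (htt : 2 * t * log (2 * t) ≤ log n' / 2) :
    knapsackEps n' t * t ≤ 16 * (t / log n') + 32 * (t / log n') ^ 2 + 16 / n' := by
  rcases Nat.eq_zero_or_pos t with rfl | ht
  · simp only [CharP.cast_eq_zero, mul_zero, zero_div]; positivity
  obtain ⟨hn, hlL, hlL'⟩ := div_mul_bounds ht (by linarith) htL hLn'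
  set n : ℕ := n' / t * t
  set L := log n'
  set l := log n
  have hl0 : 0 < l := by linarith
  have hfirst : ((1 - 2 / (⌊l⌋₊ : ℝ))⁻¹ * ((1 - (⌊l⌋₊ : ℝ) / l ^ 3) ^ (2 * t))⁻¹ - 1) * t
      ≤ 16 * (t / L) + 32 * (t / L) ^ 2 := by
    have htl : t / l ≤ 2 * (t / L) := by
      rw [div_le_iff₀ hl0]
      calc (t : ℝ) = 2 * (t / L) * (L / 2) := by field_simp
        _ ≤ 2 * (t / L) * l := by gcongr
    calc _ ≤ (8 / l + 8 * t / l ^ 2) * t :=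
          mul_le_mul_of_nonneg_right (first_term_le (by linarith) (by nlinarith)) t.cast_nonneg
      _ = 8 * (t / l) + 8 * (t / l) ^ 2 := by ring
      _ ≤ 8 * (2 * (t / L)) + 8 * (2 * (t / L)) ^ 2 := by gcongr
      _ = 16 * (t / L) + 32 * (t / L) ^ 2 := by ring
  have hsecond : (n : ℝ) / (n - 1) * (2 * (l ^ 3) ^ 2 / n ^ 2) * (2 * (t : ℝ)) ^ (2 * t) * t
      ≤ 16 / n' := by
    have hn'0 : (0 : ℝ) < n' := by linarith
    have hfrac : (n : ℝ) / (n - 1) ≤ 2 := by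
      rw [div_le_iff₀ (by linarith)]; linarith
    calc _ ≤ 2 * (2 * (L ^ 3) ^ 2 / ((n' : ℝ) / 2) ^ 2) * exp (L / 2) * L := by
          gcongr
          exact pow_two_mul_self_le_exp htt
      _ = 16 * (L ^ 7 * exp (L / 2)) / (n' : ℝ) ^ 2 := by field_simp; ring
      _ ≤ 16 * (exp (L / 2) * exp (L / 2)) / (n' : ℝ) ^ 2 := by gcongr
      _ = 16 / n' := by
        rw [← exp_add, add_halves, exp_log hn'0]; field_simp
  rw [knapsackEps, max_mul_of_nonneg _ _ t.cast_nonneg]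
  have hs0 : 0 ≤ 16 * (t / L) + 32 * (t / L) ^ 2 := by positivity
  have hn'0 : 0 ≤ 16 / (n' : ℝ) := by positivity
  exact max_le (by linarith) (by linarith)

lemma eventually_log_bounds {δ : ℝ} (hδ : 0 < δ) :
    ∀ᶠ L : ℝ in atTop, 16 ≤ L ∧ L ^ 7 ≤ exp (L / 2) ∧ log L ≤ L ^ δ / 8 := by
  filter_upwards [eventually_ge_atTop 16,
    (isLittleO_pow_exp_pos_mul_atTop 7 (by norm_num : (0 : ℝ) < 1 / 2)).bound one_pos,
    (isLittleO_log_rpow_atTop hδ).bound (by norm_num : (0 : ℝ) < 1 / 8)] with L hL h7 hlog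
  have hL0 : 0 ≤ L := by linarith
  rw [norm_pow, Real.norm_of_nonneg hL0, Real.norm_of_nonneg (exp_pos _).le, one_mul,
    one_div_mul_eq_div] at h7
  rw [Real.norm_of_nonneg (rpow_nonneg hL0 δ)] at hlog
  exact ⟨hL, h7, by linarith [Real.le_norm_self (log L)]⟩

lemma eventually_log_le_half : ∀ᶠ x : ℝ in atTop, log x ≤ x / 2 := by
  filter_upwards [eventually_ge_atTop 0,
    isLittleO_log_id_atTop.bound (by norm_num : (0 : ℝ) < 1 / 2)] with x hx h
  rw [id, Real.norm_of_nonneg hx] at h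
  linarith [Real.le_norm_self (log x)]

lemma tendsto_floor_rpow_div_self {δ : ℝ} (hδ : 0 < δ) :
    Tendsto (fun L : ℝ => (⌊L ^ (1 - δ)⌋₊ : ℝ) / L) atTop (𝓝 0) := by
  refine squeeze_zero' ?_ ?_ (tendsto_rpow_neg_atTop hδ)
  · filter_upwards [eventually_ge_atTop 0] with L hL using by positivity
  · filter_upwards [eventually_gt_atTop 0] with L hL
    calc (⌊L ^ (1 - δ)⌋₊ : ℝ) / L ≤ L ^ (1 - δ) / L := by
          gcongr; exact Nat.floor_le (by positivity)
      _ = L ^ (-δ) := by rw [← rpow_sub_one hL.ne']; ring_nf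

theorem stmt6_general (δ : ℝ) (hδ0 : 0 < δ) :
    Filter.Tendsto (fun n' : ℕ =>
      let t : ℕ := ⌊(Real.log n') ^ (1 - δ)⌋₊
      let n : ℕ := (n' / t) * t
      let β : ℕ := ⌊Real.log n⌋₊
      let A : ℝ := (Real.log n) ^ 3
      let ε : ℝ := max ((1 - 2 / (β : ℝ))⁻¹ * ((1 - (β : ℝ) / A) ^ (2 * t))⁻¹ - 1)
          (((n : ℝ) / ((n : ℝ) - 1)) * (2 * A ^ 2 / (n : ℝ) ^ 2) * (2 * (t : ℝ)) ^ (2 * t))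
      ε * (t : ℝ)) Filter.atTop (nhds 0) := by
  have hlog : Tendsto (fun n' : ℕ => log n') atTop atTop :=
    tendsto_log_atTop.comp tendsto_natCast_atTop_atTop
  have hs := (tendsto_floor_rpow_div_self hδ0).comp hlog
  have hbound := ((hs.const_mul 16).add ((hs.pow 2).const_mul 32)).add
    (tendsto_const_div_atTop_nhds_zero_nat (16 : ℝ))
  simp only [mul_zero, add_zero, ne_eq, OfNat.ofNat_ne_zero, not_false_eq_true, zero_pow]
    at hbound
  refine squeeze_zero' (Eventually.of_forall fun n' =>
    mul_nonneg (knapsackEps_nonneg n' _) (Nat.cast_nonneg _)) ?_ hbound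
  filter_upwards [hlog.eventually (eventually_log_bounds hδ0),
    tendsto_natCast_atTop_atTop.eventually eventually_log_le_half] with n' ⟨h16, h7, hδlog⟩ hn'
  have htδ : (⌊log n' ^ (1 - δ)⌋₊ : ℝ) ≤ log n' ^ (1 - δ) := Nat.floor_le (by positivity)
  have htL := htδ.trans (rpow_le_self_of_one_le (by linarith) (by linarith))
  exact knapsackEps_mul_le h16 htL hn' h7 (two_mul_log_two_mul_le (by linarith) htL htδ hδlog)

/-- the parameter `ε` of the Min-Knapsack SoS solution satisfies
`ε · t → 0` as `n' → ∞`, i.e. `ε = o(t⁻¹)`. -/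
theorem stmt6 (δ : ℝ) (hδ0 : 0 < δ) (hδ1 : δ < 1) :
    Filter.Tendsto (fun n' : ℕ =>
      let t : ℕ := ⌊(Real.log n') ^ (1 - δ)⌋₊
      let n : ℕ := (n' / t) * t
      let β : ℕ := ⌊Real.log n⌋₊
      let A : ℝ := (Real.log n) ^ 3
      let ε : ℝ := max ((1 - 2 / (β : ℝ))⁻¹ * ((1 - (β : ℝ) / A) ^ (2 * t))⁻¹ - 1)
          (((n : ℝ) / ((n : ℝ) - 1)) * (2 * A ^ 2 / (n : ℝ) ^ 2) * (2 * (t : ℝ)) ^ (2 * t))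
      ε * (t : ℝ)) Filter.atTop (nhds 0) :=
  stmt6_general δ hδ0
end

section
/- Let n ≥ 2 and t ≥ 1 be integers and let y : 2^N → ℝ satisfy: y_I ≥ 0 for every I ⊆ N, y_I = 0 whenever |I| = 1, y_∅ ≤ 1, and the matrix inequality Σ_{∅≠I⊆N} y_I · (|I| − 2) · Z_I Z_I^⊤ ⪰ (n/(n−1)) · Z_∅ Z_∅^⊤ holds for matrices indexed by P_t(N). Then: (a) the matrix Σ_{I⊆N} (|I| − n/(n−1)) · y_I · Z_I Z_I^⊤ indexed by P_t(N) is positive semidefinite; and (b) for every i ∈ N, the matrix Σ_{I⊆N} (|I∖{i}| − 1) · y_I · Z_I Z_I^⊤ indexed by P_t(N) is positive semidefinite. -/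
/-!
The hypothesis says that `momentOf n t w` is positive semidefinite for the coefficients
`w ∅ = -n/(n-1)` and `w I = y_I (|I| - 2)` for `I ≠ ∅`. Since `momentOf` is linear in its
coefficients and a combination of the rank-one matrices `Z_I Z_Iᵀ` with nonnegative coefficients
is positive semidefinite, it suffices that both target coefficient vectors dominate `w`
entrywise, which follows from `1 ≤ n/(n-1) ≤ 2`, `0 ≤ y`, `y_∅ ≤ 1` and `|I| ≤ |I ∖ {i}| + 1`.
-/

abbrev Pidx (n t : ℕ) := {S : Finset (Fin n) // S.card ≤ t}

noncomputable def zeta (n t : ℕ) (I : Finset (Fin n)) : Pidx n t → ℝ :=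
  fun J => if J.1 ⊆ I then 1 else 0

/-- The matrix `Σ_I v_I Z_I Z_I^⊤` indexed by subsets of cardinality at most `q`. -/
noncomputable def momentOf (n q : ℕ) (v : Finset (Fin n) → ℝ) :
    Matrix (Pidx n q) (Pidx n q) ℝ :=
  ∑ I : Finset (Fin n), v I • Matrix.vecMulVec (zeta n q I) (zeta n q I)

open Matrix

variable {n q : ℕ}

lemma momentOf_sub (v w : Finset (Fin n) → ℝ) :
    momentOf n q v - momentOf n q w = momentOf n q (v - w) := by
  simp only [momentOf, ← Finset.sum_sub_distrib, Pi.sub_apply, sub_smul]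

lemma posSemidef_momentOf {v : Finset (Fin n) → ℝ} (hv : ∀ I, 0 ≤ v I) :
    (momentOf n q v).PosSemidef :=
  posSemidef_sum _ fun I _ => (posSemidef_vecMulVec_self_star (zeta n q I)).smul (hv I)

lemma posSemidef_momentOf_of_le {v w : Finset (Fin n) → ℝ} (hw : (momentOf n q w).PosSemidef)
    (hwv : w ≤ v) : (momentOf n q v).PosSemidef := by
  have hsplit : momentOf n q v = momentOf n q w + momentOf n q (v - w) := by
    rw [← momentOf_sub, add_sub_cancel]
  rw [hsplit]
  exact hw.add (posSemidef_momentOf fun I => sub_nonneg.mpr (hwv I))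

lemma momentOf_ite_empty (a : ℝ) (f : Finset (Fin n) → ℝ) :
    momentOf n q (fun I => if I = ∅ then a else f I) =
      (∑ I ∈ Finset.univ.filter (fun I : Finset (Fin n) => I ≠ ∅),
        f I • vecMulVec (zeta n q I) (zeta n q I)) + a • vecMulVec (zeta n q ∅) (zeta n q ∅) := by
  rw [momentOf, ← Finset.add_sum_erase _ _ (Finset.mem_univ ∅), add_comm, if_pos rfl,
    Finset.filter_ne']
  congr 1
  exact Finset.sum_congr rfl fun I hI => by rw [if_neg (Finset.ne_of_mem_erase hI)]

theorem stmt7_general (n t : ℕ) (hn : 2 ≤ n) (y : Finset (Fin n) → ℝ)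
    (hpos : ∀ I : Finset (Fin n), 0 ≤ y I)
    (hempty : y ∅ ≤ 1)
    (hineq : ((∑ I ∈ Finset.univ.filter (fun I : Finset (Fin n) => I ≠ ∅),
        (y I * ((I.card : ℝ) - 2)) • Matrix.vecMulVec (zeta n t I) (zeta n t I)) -
        ((n : ℝ) / ((n : ℝ) - 1)) •
          Matrix.vecMulVec (zeta n t ∅) (zeta n t ∅)).PosSemidef) :
    (momentOf n t (fun I => ((I.card : ℝ) - (n : ℝ) / ((n : ℝ) - 1)) * y I)).PosSemidef ∧
    (∀ i : Fin n, (momentOf n t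
      (fun I => (((I.erase i).card : ℝ) - 1) * y I)).PosSemidef) := by
  set c : ℝ := (n : ℝ) / ((n : ℝ) - 1)
  have hn' : (2 : ℝ) ≤ n := by exact_mod_cast hn
  have hc1 : 1 ≤ c := by rw [le_div_iff₀ (by linarith)]; linarith
  have hc2 : c ≤ 2 := by rw [div_le_iff₀ (by linarith)]; linarith
  rw [sub_eq_add_neg, ← neg_smul, ← momentOf_ite_empty] at hineq
  refine ⟨posSemidef_momentOf_of_le hineq fun I => ?_,
    fun i => posSemidef_momentOf_of_le hineq fun I => ?_⟩
  · split_ifs with hI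
    · subst hI
      simp only [Finset.card_empty, Nat.cast_zero]
      nlinarith [mul_nonneg (by linarith : (0 : ℝ) ≤ c) (sub_nonneg.mpr hempty)]
    · nlinarith [mul_nonneg (sub_nonneg.mpr hc2) (hpos I)]
  · split_ifs with hI
    · subst hI
      simp only [Finset.erase_empty, Finset.card_empty, Nat.cast_zero]
      linarith
    · have hcard : I.card ≤ (I.erase i).card + 1 :=
        Nat.le_add_of_sub_le Finset.pred_card_le_card_erase
      replace hcard : (I.card : ℝ) ≤ (I.erase i).card + 1 := by exact_mod_cast hcard
      nlinarith [mul_nonneg (sub_nonneg.mpr hcard) (hpos I)]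

/-- the single matrix inequality
`Σ_{∅≠I} y_I (|I|-2) Z_I Z_I^⊤ ⪰ (n/(n-1)) Z_∅ Z_∅^⊤` implies the PSD conditions for
the knapsack constraint and for all the cover constraints. -/
theorem stmt7 (n t : ℕ) (hn : 2 ≤ n) (ht : 1 ≤ t) (y : Finset (Fin n) → ℝ)
    (hpos : ∀ I : Finset (Fin n), 0 ≤ y I)
    (hone : ∀ I : Finset (Fin n), I.card = 1 → y I = 0)
    (hempty : y ∅ ≤ 1)
    (hineq : ((∑ I ∈ Finset.univ.filter (fun I : Finset (Fin n) => I ≠ ∅),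
        (y I * ((I.card : ℝ) - 2)) • Matrix.vecMulVec (zeta n t I) (zeta n t I)) -
        ((n : ℝ) / ((n : ℝ) - 1)) •
          Matrix.vecMulVec (zeta n t ∅) (zeta n t ∅)).PosSemidef) :
    (momentOf n t (fun I => ((I.card : ℝ) - (n : ℝ) / ((n : ℝ) - 1)) * y I)).PosSemidef ∧
    (∀ i : Fin n, (momentOf n t
      (fun I => (((I.erase i).card : ℝ) - 1) * y I)).PosSemidef) :=
  stmt7_general n t hn y hpos hempty hineq
end

section
/- Let n ≥ 2 and t ≥ 1 be integers and let y_1, ..., y_n be real numbers with y_k · (k − 2) ≥ 0 for every k ∈ {1, ..., n}. Suppose that for all real numbers r_1, ..., r_t ∈ [1, n]: Σ_{k=1}^{n} y_k · (k − 2) · C(n,k) · Π_{i=1}^{t} (r_i − k)² ≥ (n/(n−1)) · Π_{i=1}^{t} r_i². Then for every real polynomial P of degree at most t: Σ_{k=1}^{n} y_k · (k − 2) · C(n,k) · P(k)² ≥ (n/(n−1)) · P(0)². -/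
/-!
Factor `P` over `ℂ`. Every factor `|x - z|` can be traded for `l |x - s|` with `s ∈ [1, n]` and
`l ≥ 0`, at no gain on `[1, n]` and no loss at `0`: for real `z` move it to the nearest point of
`[1, n]` (or to the far end when `z < 0`), and for non-real `z` use
`|Re (z̄ (x - z))| ≤ |z| |x - z|`, i.e. `|x - z| ≥ |Re z · x - |z|²| / |z|` with equality at `0`.
Missing degrees are padded with the factor `1 ≥ |x - n| / (n - 1)`. This yields `A ∏ (x - rᵢ)`
with all `rᵢ ∈ [1, n]` that is at most `|P|` at the nodes `k` and at least `|P|` at `0`, so the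
hypothesis for `∏ (x - rᵢ)`, scaled by `A²`, gives the claim for `P`.
-/

open Polynomial Set

/-- `g` can be traded for `A ∏ |x - rᵢ|` with all `rᵢ ∈ [1, N]`, which is no larger on `[1, N]`
and no smaller at `0`. -/
def HasRootSubstitute (N : ℝ) (t : ℕ) (g : ℝ → ℝ) : Prop :=
  ∃ r : Fin t → ℝ, (∀ i, r i ∈ Icc 1 N) ∧ ∃ A : ℝ, 0 ≤ A ∧
    (∀ x ∈ Icc 1 N, A * ∏ i, |x - r i| ≤ g x) ∧ g 0 ≤ A * ∏ i, r i

namespace HasRootSubstitute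

variable {N : ℝ} {t u : ℕ} {g h : ℝ → ℝ}

theorem mono (hh : HasRootSubstitute N t h) (hle : ∀ x ∈ Icc 1 N, h x ≤ g x) (h0 : g 0 ≤ h 0) :
    HasRootSubstitute N t g := by
  obtain ⟨r, hr, A, hA, hx, h0'⟩ := hh
  exact ⟨r, hr, A, hA, fun x hx' => (hx x hx').trans (hle x hx'), h0.trans h0'⟩

theorem const_mul (hg : HasRootSubstitute N t g) {c : ℝ} (hc : 0 ≤ c) :
    HasRootSubstitute N t (fun x => c * g x) := by
  obtain ⟨r, hr, A, hA, hx, h0⟩ := hg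
  refine ⟨r, hr, c * A, mul_nonneg hc hA, fun x hx' => ?_, ?_⟩
  · rw [mul_assoc]
    exact mul_le_mul_of_nonneg_left (hx x hx') hc
  · rw [mul_assoc]
    exact mul_le_mul_of_nonneg_left h0 hc

theorem mul (hg : HasRootSubstitute N t g) (hh : HasRootSubstitute N u h) (hh0 : 0 ≤ h 0) :
    HasRootSubstitute N (t + u) (fun x => g x * h x) := by
  obtain ⟨r, hr, A, hA, hgx, hg0⟩ := hg
  obtain ⟨s, hs, B, hB, hhx, hh0'⟩ := hh
  have hr0 : 0 ≤ ∏ i, r i := Finset.prod_nonneg fun i _ => zero_le_one.trans (hr i).1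
  refine ⟨Fin.append r s, Fin.addCases (by simpa using hr) (by simpa using hs), A * B,
    mul_nonneg hA hB, fun x hx => ?_, ?_⟩
  · simp only [Fin.prod_univ_add, Fin.append_left, Fin.append_right]
    calc A * B * ((∏ i, |x - r i|) * ∏ i, |x - s i|)
        = (A * ∏ i, |x - r i|) * (B * ∏ i, |x - s i|) := by ring
      _ ≤ g x * h x := mul_le_mul (hgx x hx) (hhx x hx) (by positivity)
          ((by positivity : 0 ≤ A * ∏ i, |x - r i|).trans (hgx x hx))
  · simp only [Fin.prod_univ_add, Fin.append_left, Fin.append_right]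
    calc g 0 * h 0 ≤ (A * ∏ i, r i) * (B * ∏ i, s i) :=
          mul_le_mul hg0 hh0' hh0 (mul_nonneg hA hr0)
      _ = A * B * ((∏ i, r i) * ∏ i, s i) := by ring

theorem const {c : ℝ} (hc : 0 ≤ c) : HasRootSubstitute N 0 (fun _ => c) :=
  ⟨Fin.elim0, fun i => i.elim0, c, hc, by simp, by simp⟩

theorem of_linear {s l : ℝ} (hs : s ∈ Icc 1 N) (hl : 0 ≤ l)
    (hx : ∀ x ∈ Icc 1 N, l * |x - s| ≤ g x) (h0 : g 0 ≤ l * s) : HasRootSubstitute N 1 g :=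
  ⟨fun _ => s, fun _ => hs, l, hl, by simpa using hx, by simpa using h0⟩

theorem one (hN : 1 < N) (e : ℕ) : HasRootSubstitute N e (fun _ => 1) := by
  induction e with
  | zero => exact const zero_le_one
  | succ e ih =>
    have hsingle : HasRootSubstitute N 1 (fun _ => 1) := by
      refine of_linear (s := N) (l := 1 / (N - 1)) ⟨hN.le, le_rfl⟩ (by positivity)
        (fun x hx => ?_) ?_
      · rw [abs_of_nonpos (by linarith [hx.2]), div_mul_eq_mul_div, div_le_one (by linarith)]
        linarith [hx.1]
      · rw [div_mul_eq_mul_div, one_mul, le_div_iff₀ (by linarith)]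
        linarith
    exact (ih.mul hsingle zero_le_one).mono (by simp) (by simp)

theorem abs_sub (hN : 1 < N) (ρ : ℝ) : HasRootSubstitute N 1 (fun x => |x - ρ|) := by
  rcases lt_or_ge ρ 0 with hρ0 | hρ0
  · refine of_linear (s := N) (l := (1 - ρ) / (N - 1)) ⟨hN.le, le_rfl⟩
      (div_nonneg (by linarith) (by linarith)) (fun x hx => ?_) ?_
    · rw [abs_of_nonpos (by linarith [hx.2]), abs_of_nonneg (by linarith [hx.1]),
        div_mul_eq_mul_div, div_le_iff₀ (by linarith)]
      nlinarith [hx.1]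
    · rw [zero_sub, abs_neg, abs_of_neg hρ0, div_mul_eq_mul_div, le_div_iff₀ (by linarith)]
      nlinarith
  rcases lt_or_ge ρ 1 with hρ1 | hρ1
  · refine of_linear (s := 1) (l := (N - ρ) / (N - 1)) ⟨le_rfl, hN.le⟩
      (div_nonneg (by linarith) (by linarith)) (fun x hx => ?_) ?_
    · rw [abs_of_nonneg (by linarith [hx.1]), abs_of_nonneg (by linarith [hx.1]),
        div_mul_eq_mul_div, div_le_iff₀ (by linarith)]
      nlinarith [hx.2]
    · rw [zero_sub, abs_neg, abs_of_nonneg hρ0, mul_one, le_div_iff₀ (by linarith)]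
      nlinarith
  rcases le_or_gt ρ N with hρN | hρN
  · exact of_linear (s := ρ) (l := 1) ⟨hρ1, hρN⟩ zero_le_one (fun x _ => (one_mul _).le)
      (by rw [zero_sub, abs_neg, abs_of_nonneg hρ0, one_mul])
  · refine of_linear (s := N) (l := ρ / N) ⟨hN.le, le_rfl⟩ (by positivity) (fun x hx => ?_) ?_
    · rw [abs_of_nonpos (by linarith [hx.2]), abs_of_nonpos (by linarith [hx.2]),
        div_mul_eq_mul_div, div_le_iff₀ (by linarith)]
      nlinarith [hx.1]
    · rw [zero_sub, abs_neg, abs_of_nonneg hρ0, div_mul_cancel₀ _ (by linarith)]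

theorem abs_affine (hN : 1 < N) (a b : ℝ) : HasRootSubstitute N 1 (fun x => |a * x - b|) := by
  rcases eq_or_ne a 0 with rfl | ha
  · exact ((one hN 1).const_mul (abs_nonneg b)).mono (by simp) (by simp)
  · have h : ∀ x, |a| * |x - b / a| = |a * x - b| := fun x => by
      rw [← abs_mul, mul_sub, mul_div_cancel₀ _ ha]
    exact ((abs_sub hN (b / a)).const_mul (abs_nonneg a)).mono (fun x _ => (h x).le) (h 0).ge

theorem norm_sub (hN : 1 < N) (z : ℂ) : HasRootSubstitute N 1 (fun x => ‖(x : ℂ) - z‖) := by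
  have key : ∀ x : ℝ, |z.re * x - ‖z‖ ^ 2| ≤ ‖z‖ * ‖(x : ℂ) - z‖ := fun x => by
    have hre : z.re * x - ‖z‖ ^ 2 = (starRingEnd ℂ z * ((x : ℂ) - z)).re := by
      simp [Complex.sq_norm, Complex.normSq_apply]
      ring
    rw [hre, ← Complex.norm_conj z, ← norm_mul]
    exact Complex.abs_re_le_norm _
  refine ((abs_affine hN z.re (‖z‖ ^ 2)).const_mul (inv_nonneg.2 (norm_nonneg z))).mono
    (fun x _ => inv_mul_le_of_le_mul₀ (norm_nonneg z) (norm_nonneg _) (key x)) ?_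
  rw [mul_zero, zero_sub, abs_neg, abs_of_nonneg (sq_nonneg _), inv_mul_eq_div, sq,
    mul_self_div_self, Complex.ofReal_zero, zero_sub, norm_neg]

theorem multiset_prod_norm_sub (hN : 1 < N) (m : Multiset ℂ) :
    HasRootSubstitute N (Multiset.card m) (fun x => (m.map fun z => ‖(x : ℂ) - z‖).prod) := by
  induction m using Multiset.induction_on with
  | empty => simpa using const (N := N) zero_le_one
  | cons z m ih =>
    rw [Multiset.card_cons]
    exact (ih.mul (norm_sub hN z) (norm_nonneg _)).mono (fun x _ => by simp [mul_comm])
      (by simp [mul_comm])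

end HasRootSubstitute

theorem Polynomial.abs_eval_eq_prod_aroots (P : ℝ[X]) (x : ℝ) :
    |P.eval x| = |P.leadingCoeff| * ((P.aroots ℂ).map fun z => ‖(x : ℂ) - z‖).prod := by
  have h := (IsAlgClosed.splits (P.map (algebraMap ℝ ℂ))).aeval_eq_prod_aroots (x : ℂ)
  rw [← Real.norm_eq_abs, ← Complex.norm_real, ← Complex.coe_algebraMap,
    ← aeval_algebraMap_apply_eq_algebraMap_eval, Complex.coe_algebraMap, h, norm_mul,
    Complex.coe_algebraMap, Complex.norm_real, Real.norm_eq_abs]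
  exact congrArg _ ((map_multiset_prod (normHom : ℂ →*₀ ℝ) _).trans (by rw [Multiset.map_map]; rfl))

theorem HasRootSubstitute.abs_eval {N : ℝ} {t : ℕ} (hN : 1 < N) {P : ℝ[X]}
    (hP : P.natDegree ≤ t) : HasRootSubstitute N t (fun x => |P.eval x|) := by
  obtain ⟨e, rfl⟩ := Nat.exists_eq_add_of_le hP
  have h := ((multiset_prod_norm_sub hN (P.aroots ℂ)).mul (one hN e)
    zero_le_one).const_mul (abs_nonneg P.leadingCoeff)
  rw [IsAlgClosed.card_aroots_eq_natDegree] at h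
  exact h.mono (fun x _ => by rw [P.abs_eval_eq_prod_aroots, mul_one])
    (by rw [P.abs_eval_eq_prod_aroots, mul_one])

theorem stmt8_general (n t : ℕ) (hn : 2 ≤ n) (y : ℕ → ℝ)
    (hpos : ∀ k ∈ Finset.Icc 1 n, 0 ≤ y k * ((k : ℝ) - 2))
    (hroot : ∀ r : Fin t → ℝ, (∀ i : Fin t, 1 ≤ r i ∧ r i ≤ (n : ℝ)) →
      ((n : ℝ) / ((n : ℝ) - 1)) * ∏ i : Fin t, (r i) ^ 2 ≤
        ∑ k ∈ Finset.Icc 1 n,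
          y k * ((k : ℝ) - 2) * (n.choose k : ℝ) * ∏ i : Fin t, (r i - (k : ℝ)) ^ 2) :
    ∀ P : Polynomial ℝ, P.natDegree ≤ t →
      ((n : ℝ) / ((n : ℝ) - 1)) * P.eval 0 ^ 2 ≤
        ∑ k ∈ Finset.Icc 1 n,
          y k * ((k : ℝ) - 2) * (n.choose k : ℝ) * P.eval (k : ℝ) ^ 2 := by
  intro P hP
  have hN : (1 : ℝ) < n := by exact_mod_cast hn
  obtain ⟨r, hr, A, hA, hle, h0⟩ := HasRootSubstitute.abs_eval hN hP
  calc (n : ℝ) / (n - 1) * P.eval 0 ^ 2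
      ≤ n / (n - 1) * (A * ∏ i, r i) ^ 2 := by
        rw [← sq_abs]
        gcongr
    _ = A ^ 2 * (n / (n - 1) * ∏ i, r i ^ 2) := by rw [Finset.prod_pow]; ring
    _ ≤ A ^ 2 * ∑ k ∈ Finset.Icc 1 n,
          y k * ((k : ℝ) - 2) * (n.choose k : ℝ) * ∏ i, (r i - (k : ℝ)) ^ 2 := by
        gcongr
        exact hroot r hr
    _ = ∑ k ∈ Finset.Icc 1 n,
          y k * ((k : ℝ) - 2) * (n.choose k : ℝ) * (A * ∏ i, |(k : ℝ) - r i|) ^ 2 := by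
        rw [Finset.mul_sum]
        refine Finset.sum_congr rfl fun k _ => ?_
        simp only [mul_pow, ← Finset.prod_pow, sq_abs, ← neg_sub (r _), neg_sq]
        ring
    _ ≤ ∑ k ∈ Finset.Icc 1 n, y k * ((k : ℝ) - 2) * (n.choose k : ℝ) * P.eval (k : ℝ) ^ 2 := by
        refine Finset.sum_le_sum fun k hk => ?_
        have hw := mul_nonneg (hpos k hk) (n.choose k).cast_nonneg
        obtain ⟨hk1, hkn⟩ := Finset.mem_Icc.1 hk
        rw [← sq_abs (P.eval _)]
        gcongr
        exact hle k ⟨by exact_mod_cast hk1, by exact_mod_cast hkn⟩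

/-- if the weighted inequality holds for all degree-`t` polynomials with
all roots real and in `[1,n]` (root form), it holds for all real polynomials of degree
at most `t`. -/
theorem stmt8 (n t : ℕ) (hn : 2 ≤ n) (ht : 1 ≤ t) (y : ℕ → ℝ)
    (hpos : ∀ k ∈ Finset.Icc 1 n, 0 ≤ y k * ((k : ℝ) - 2))
    (hroot : ∀ r : Fin t → ℝ, (∀ i : Fin t, 1 ≤ r i ∧ r i ≤ (n : ℝ)) →
      ((n : ℝ) / ((n : ℝ) - 1)) * ∏ i : Fin t, (r i) ^ 2 ≤
        ∑ k ∈ Finset.Icc 1 n,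
          y k * ((k : ℝ) - 2) * (n.choose k : ℝ) * ∏ i : Fin t, (r i - (k : ℝ)) ^ 2) :
    ∀ P : Polynomial ℝ, P.natDegree ≤ t →
      ((n : ℝ) / ((n : ℝ) - 1)) * P.eval 0 ^ 2 ≤
        ∑ k ∈ Finset.Icc 1 n,
          y k * ((k : ℝ) - 2) * (n.choose k : ℝ) * P.eval (k : ℝ) ^ 2 :=
  stmt8_general n t hn y hpos hroot
end

section
/- Let n ≥ 1, t ≥ 0 be integers, let z_0, ..., z_n be real numbers, and let M = Σ_{k=0}^{n} z_k Σ_{I ⊆ N, |I| = k} Z_I Z_I^⊤ be the symmetric moment matrix indexed by P_t(N). Then for every eigenvalue λ of M there exists h ∈ {0, 1, ..., t} and real coefficients α_{i,j} (0 ≤ i ≤ t, 0 ≤ j ≤ min(h,i)) such that the vector u_h = Σ_{i=0}^{t} Σ_{j=0}^{min(h,i)} α_{i,j} · b_{i,j} is nonzero and satisfies M u_h = λ u_h, where H = {1, ..., h} and b_{i,j} ∈ ℝ^{P_t(N)} is the 0/1 vector with [b_{i,j}]_Q = 1 if and only if |Q| = i and |Q ∩ H| = j. -/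
noncomputable def momentM (n t : ℕ) (z : ℕ → ℝ) : Matrix (Pidx n t) (Pidx n t) ℝ :=
  ∑ k ∈ Finset.range (n + 1), z k •
    ∑ I ∈ Finset.univ.filter (fun I : Finset (Fin n) => I.card = k),
      Matrix.vecMulVec (zeta n t I) (zeta n t I)

/-!
Permutations of `N` act on `P_t(N)` and leave the moment matrix invariant, so transporting an
eigenvector along a permutation gives another eigenvector for the same eigenvalue. Take an
eigenvector `w` with `w Q₀ ≠ 0`, put `h = |Q₀|` and `H = {1, …, h}`, and sum the transports of `w`
along all permutations `σ` with `σ H = Q₀`. The sum is again an eigenvector, its value at `H` is a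
positive multiple of `w Q₀`, and it is invariant under the stabilizer of `H`. That stabilizer moves
`Q` to `Q'` as soon as `|Q| = |Q'|` and `|Q ∩ H| = |Q' ∩ H|`, so the sum is a combination of the
vectors `b_{i,j}`.
-/

open Finset Matrix Pointwise Equiv

section OrbitSum

variable {G ι R : Type*} [Group G] [MulAction G ι] [AddCommMonoid R]

def orbitSum (S : Finset G) (w : ι → R) : ι → R := fun i => ∑ g ∈ S, w (g • i)

variable [Fintype G] [DecidableEq ι]

theorem orbitSum_apply_self (x y : ι) (w : ι → R) :
    orbitSum ({g | g • x = y} : Finset G) w x = #({g | g • x = y} : Finset G) • w y := by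
  rw [orbitSum, sum_congr rfl fun g hg => by rw [(mem_filter.mp hg).2], sum_const]

theorem orbitSum_smul_of_smul_eq {x y : ι} {τ : G} (hτ : τ • x = x) (w : ι → R) (i : ι) :
    orbitSum ({g | g • x = y} : Finset G) w (τ • i) =
      orbitSum ({g | g • x = y} : Finset G) w i := by
  refine sum_equiv (Equiv.mulRight τ) (fun g => ?_) (fun g _ => ?_)
  · simp [mul_smul, hτ]
  · simp [mul_smul]

end OrbitSum

section InvariantMatrix

variable {G ι R : Type*} [Group G] [MulAction G ι] [Fintype ι] [NonUnitalNonAssocSemiring R]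
  {A : Matrix ι ι R}

theorem Matrix.mulVec_comp_smul (hA : ∀ (g : G) i j, A (g • i) (g • j) = A i j) (g : G)
    (w : ι → R) : A *ᵥ (fun i => w (g • i)) = fun i => (A *ᵥ w) (g • i) := by
  ext i
  exact Fintype.sum_equiv (MulAction.toPerm g) _ _ fun j => by simp [hA]

theorem Matrix.mulVec_orbitSum (hA : ∀ (g : G) i j, A (g • i) (g • j) = A i j) {c : R}
    {w : ι → R} (hw : A *ᵥ w = c • w) (S : Finset G) :
    A *ᵥ orbitSum S w = c • orbitSum S w := by
  have hsum : orbitSum S w = ∑ g ∈ S, fun i => w (g • i) := by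
    ext i; simp [orbitSum]
  simp only [hsum, Matrix.mulVec_sum, Matrix.mulVec_comp_smul hA, hw, smul_sum]
  rfl

end InvariantMatrix

namespace Finset

variable {α : Type*} [DecidableEq α]

theorem exists_perm_smul_eq {A B : Finset α} (h : #A = #B) : ∃ σ : Perm α, σ • A = B := by
  have := Set.powersetCard.isPretransitive (α := α) (n := #B)
  obtain ⟨σ, hσ⟩ := MulAction.exists_smul_eq (Perm α)
    (⟨A, Set.powersetCard.mem_iff.mpr h⟩ : Set.powersetCard α #B) ⟨B, rfl⟩
  exact ⟨σ, congrArg Subtype.val hσ⟩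

theorem perm_smul_eq_of_forall_mem_iff {A B : Finset α} {τ : Perm α}
    (h : ∀ x, τ x ∈ B ↔ x ∈ A) : τ • A = B := by
  ext y
  obtain ⟨x, rfl⟩ := τ.surjective y
  rw [← Perm.smul_def, smul_mem_smul_finset_iff, Perm.smul_def, h]

theorem exists_perm_smul_eq_of_card_inter_eq {A B H : Finset α} (h : #A = #B)
    (hH : #(A ∩ H) = #(B ∩ H)) : ∃ τ : Perm α, τ • H = H ∧ τ • A = B := by
  have hin : #(A.subtype (· ∈ H)) = #(B.subtype (· ∈ H)) := by
    simpa only [card_subtype, filter_mem_eq_inter] using hH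
  have hout : #(A.subtype (· ∉ H)) = #(B.subtype (· ∉ H)) := by
    have hA := card_filter_add_card_filter_not (s := A) (p := (· ∈ H))
    have hB := card_filter_add_card_filter_not (s := B) (p := (· ∈ H))
    rw [filter_mem_eq_inter] at hA hB
    rw [card_subtype, card_subtype]
    omega
  obtain ⟨π₁, hπ₁⟩ := exists_perm_smul_eq hin
  obtain ⟨π₂, hπ₂⟩ := exists_perm_smul_eq hout
  refine ⟨π₁.subtypeCongr π₂, perm_smul_eq_of_forall_mem_iff fun x => ?_,
    perm_smul_eq_of_forall_mem_iff fun x => ?_⟩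
  · by_cases hx : x ∈ H
    · simp [Perm.subtypeCongr.left_apply _ _ hx, hx]
    · simp [Perm.subtypeCongr.right_apply _ _ hx, hx, (π₂ ⟨x, hx⟩).2]
  · by_cases hx : x ∈ H
    · rw [Perm.subtypeCongr.left_apply _ _ hx, ← mem_subtype (p := (· ∈ H)), ← hπ₁,
        ← Perm.smul_def, smul_mem_smul_finset_iff, mem_subtype]
    · rw [Perm.subtypeCongr.right_apply _ _ hx, ← mem_subtype (p := (· ∉ H)), ← hπ₂,
        ← Perm.smul_def, smul_mem_smul_finset_iff, mem_subtype]

end Finset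

namespace Pidx

variable {n t : ℕ}

instance : MulAction (Perm (Fin n)) (Pidx n t) where
  smul σ Q := ⟨σ • Q.1, (card_smul_finset σ Q.1).trans_le Q.2⟩
  one_smul Q := Subtype.ext (one_smul _ Q.1)
  mul_smul σ τ Q := Subtype.ext (mul_smul σ τ Q.1)

@[simp]
theorem coe_smul (σ : Perm (Fin n)) (Q : Pidx n t) : (σ • Q).1 = σ • Q.1 := rfl

theorem exists_smul_eq_of_card_inter_eq {P Q Q' : Pidx n t} (h : #Q.1 = #Q'.1)
    (hP : #(Q.1 ∩ P.1) = #(Q'.1 ∩ P.1)) : ∃ τ : Perm (Fin n), τ • P = P ∧ τ • Q = Q' := by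
  obtain ⟨τ, hτP, hτQ⟩ := exists_perm_smul_eq_of_card_inter_eq h hP
  exact ⟨τ, Subtype.ext hτP, Subtype.ext hτQ⟩

end Pidx

theorem zeta_smul {n t : ℕ} (σ : Perm (Fin n)) (I : Finset (Fin n)) (Q : Pidx n t) :
    zeta n t (σ • I) (σ • Q) = zeta n t I Q := by
  simp only [zeta, Pidx.coe_smul, smul_finset_subset_smul_finset_iff]

theorem momentM_smul {n t : ℕ} (z : ℕ → ℝ) (σ : Perm (Fin n)) (J K : Pidx n t) :
    momentM n t z (σ • J) (σ • K) = momentM n t z J K := by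
  simp only [momentM, Matrix.sum_apply, Matrix.smul_apply, vecMulVec_apply]
  refine sum_congr rfl fun k _ => congrArg _ ?_
  symm
  refine sum_equiv (MulAction.toPerm σ) (fun I => ?_) (fun I _ => ?_)
  · simp [card_smul_finset]
  · simp [zeta_smul]

theorem sum_sum_mul_ite_and_eq {ι κ R : Type*} [DecidableEq ι] [DecidableEq κ] [Semiring R]
    {s : Finset ι} {T : ι → Finset κ} (α : ι → κ → R) {a : ι} {b : κ} (ha : a ∈ s)
    (hb : b ∈ T a) :
    ∑ i ∈ s, ∑ j ∈ T i, α i j * (if a = i ∧ b = j then 1 else 0) = α a b := by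
  simp [ite_and, sum_ite_eq, ha, hb]

theorem stmt14_general (n t : ℕ) (z : ℕ → ℝ) (lam : ℝ)
    (hlam : ∃ w : Pidx n t → ℝ, w ≠ 0 ∧ (momentM n t z).mulVec w = lam • w) :
    ∃ h : ℕ, h ≤ t ∧ ∃ α : ℕ → ℕ → ℝ, ∀ u : Pidx n t → ℝ,
      (∀ Q : Pidx n t, u Q =
        ∑ i ∈ Finset.range (t + 1), ∑ j ∈ Finset.range (min h i + 1),
          α i j * (if Q.1.card = i ∧
            (Q.1 ∩ Finset.univ.filter (fun x : Fin n => (x : ℕ) < h)).card = j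
            then 1 else 0)) →
      u ≠ 0 ∧ (momentM n t z).mulVec u = lam • u := by
  classical
  obtain ⟨w, hw0, hw⟩ := hlam
  obtain ⟨Q₀, hQ₀ : w Q₀ ≠ 0⟩ := Function.ne_iff.mp hw0
  set h := #Q₀.1
  have hH : #(univ.filter fun x : Fin n => (x : ℕ) < h) = h := by
    rw [Fin.card_filter_val_lt, min_eq_right (by simpa using card_le_univ Q₀.1)]
  set H : Pidx n t := ⟨univ.filter fun x : Fin n => (x : ℕ) < h, hH.trans_le Q₀.2⟩
  obtain ⟨σ, hσ⟩ := exists_perm_smul_eq hH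
  set v := orbitSum ({g | g • H = Q₀} : Finset (Perm (Fin n))) w
  have hv : (momentM n t z) *ᵥ v = lam • v := Matrix.mulVec_orbitSum (momentM_smul z) hw _
  have hvH : v H ≠ 0 := (orbitSum_apply_self H Q₀ w).trans_ne <|
    smul_ne_zero (card_ne_zero_of_mem (by simpa using Subtype.ext hσ)) hQ₀
  let key : Pidx n t → ℕ × ℕ := fun Q => (#Q.1, #(Q.1 ∩ H.1))
  have hfac : v.FactorsThrough key := fun Q Q' hQ => by
    obtain ⟨τ, hτH, rfl⟩ := Pidx.exists_smul_eq_of_card_inter_eq (Prod.ext_iff.mp hQ).1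
      (Prod.ext_iff.mp hQ).2
    exact (orbitSum_smul_of_smul_eq hτH w Q).symm
  refine ⟨h, Q₀.2, fun i j => Function.extend key v 0 (i, j), fun u hu => ?_⟩
  obtain rfl : u = v := funext fun Q => by
    have hi : #Q.1 ∈ range (t + 1) := mem_range_succ_iff.mpr Q.2
    have hj : #(Q.1 ∩ H.1) ∈ range (min h #Q.1 + 1) := mem_range_succ_iff.mpr
      (le_min ((card_le_card inter_subset_right).trans_eq hH) (card_le_card inter_subset_left))
    rw [hu, sum_sum_mul_ite_and_eq _ hi hj]
    exact hfac.extend_apply _ Q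
  exact ⟨fun h0 => hvH (congrFun h0 H), hv⟩

/-- every eigenvalue of the moment matrix has an eigenvector of the
structured form `u_h = Σ_{i,j} α_{i,j} b_{i,j}` with `H = {1,...,h}` for some `h ≤ t`,
where `[b_{i,j}]_Q = 1` iff `|Q| = i` and `|Q ∩ H| = j`. -/
theorem stmt14 (n t : ℕ) (hn : 1 ≤ n) (z : ℕ → ℝ) (lam : ℝ)
    (hlam : ∃ w : Pidx n t → ℝ, w ≠ 0 ∧ (momentM n t z).mulVec w = lam • w) :
    ∃ h : ℕ, h ≤ t ∧ ∃ α : ℕ → ℕ → ℝ, ∀ u : Pidx n t → ℝ,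
      (∀ Q : Pidx n t, u Q =
        ∑ i ∈ Finset.range (t + 1), ∑ j ∈ Finset.range (min h i + 1),
          α i j * (if Q.1.card = i ∧
            (Q.1 ∩ Finset.univ.filter (fun x : Fin n => (x : ℕ) < h)).card = j
            then 1 else 0)) →
      u ≠ 0 ∧ (momentM n t z).mulVec u = lam • u :=
  stmt14_general n t z lam hlam
end

section
/- Let n ≥ 1 and 0 ≤ h ≤ t ≤ n be integers, let H = {1, ..., h} ⊆ N, let α_{i,j} (0 ≤ i ≤ t, 0 ≤ j ≤ min(h,i)) be real coefficients, and let u = Σ_{i=0}^{t} Σ_{j=0}^{min(h,i)} α_{i,j} · b_{i,j} ∈ ℝ^{P_t(N)}, where b_{i,j} is the 0/1 vector with [b_{i,j}]_Q = 1 if and only if |Q| = i and |Q ∩ H| = j. Then for every k ∈ {0, ..., n}: Σ_{I ⊆ N, |I| = k} (u^⊤ Z_I)² = C(n,k) · G_h(k) / n^{(h)}, where n^{(h)} = n(n−1)⋯(n−h+1). -/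
/-- Falling factorial `x^{(m)} = x(x-1)⋯(x-m+1)`. -/
noncomputable def fallFac (x : ℝ) (m : ℕ) : ℝ := ∏ i ∈ Finset.range m, (x - (i : ℝ))

/-- Generalized binomial coefficient `C(x,i) = x(x-1)⋯(x-i+1)/i!`. -/
noncomputable def genBinom (x : ℝ) (i : ℕ) : ℝ := fallFac x i / (i.factorial : ℝ)

/-- `p_j(x) = Σ_{i=0}^{t-j} α_{i+j,j} C(x,i)`. -/
noncomputable def pFun (α : ℕ → ℕ → ℝ) (t j : ℕ) (x : ℝ) : ℝ :=
  ∑ i ∈ Finset.range (t - j + 1), α (i + j) j * genBinom x i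

/-- `G_h(k) = Σ_{r=0}^h C(h,r) h_r(k) (Σ_{j=0}^h C(r,j) p_j(k-r))²` with
`h_r(k) = k^{(r)} (n-k)^{(h-r)}`. -/
noncomputable def Gfun (n t h : ℕ) (α : ℕ → ℕ → ℝ) (k : ℝ) : ℝ :=
  ∑ r ∈ Finset.range (h + 1),
    (h.choose r : ℝ) * (fallFac k r * fallFac ((n : ℝ) - k) (h - r)) *
      (∑ j ∈ Finset.range (h + 1), (r.choose j : ℝ) * pFun α t j (k - (r : ℝ))) ^ 2

/-! For `|I| = k` and `a = |I ∩ H|`, the sets `Q ⊆ I` with `|Q| = i` and `|Q ∩ H| = j` number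
`C(a,j) C(k-a,i-j)`, so after exchanging the sums over `i` and `j` one gets
`u^⊤ Z_I = Σ_j C(a,j) p_j(k-a)`, a function of `a` alone. There are `C(h,a) C(n-h,k-a)` sets `I`
with `|I| = k` and `|I ∩ H| = a`, and `C(n-h,k-a) n^{(h)} = C(n,k) k^{(a)} (n-k)^{(h-a)}`, which
turns the sum over `a` into `C(n,k) G_h(k) / n^{(h)}`. -/

open Finset
open scoped Nat

lemma fallFac_natCast (m r : ℕ) : fallFac m r = m.descFactorial r := by
  rw [fallFac, ← descPochhammer_eval_eq_prod_range, descPochhammer_eval_eq_descFactorial]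

lemma genBinom_natCast (m i : ℕ) : genBinom m i = m.choose i := by
  rw [genBinom, fallFac_natCast, Nat.choose_eq_descFactorial_div_factorial,
    Nat.cast_div (Nat.factorial_dvd_descFactorial m i) (by positivity)]

lemma choose_sub_mul_descFactorial {n k h a : ℕ} (hah : a ≤ h) (hhn : h ≤ n) (hak : a ≤ k) :
    (n - h).choose (k - a) * n.descFactorial h
      = n.choose k * k.descFactorial a * (n - k).descFactorial (h - a) := by
  rcases le_or_gt (k - a) (n - h) with hle | hlt
  · have hkn : k ≤ n := by omega
    have hm : n - h - (k - a) = n - k - (h - a) := by omega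
    refine Nat.eq_of_mul_eq_mul_right (m := (k - a)! * (n - k - (h - a))!) (by positivity) ?_
    calc (n - h).choose (k - a) * n.descFactorial h * ((k - a)! * (n - k - (h - a))!)
        = ((n - h).choose (k - a) * (k - a)! * (n - h - (k - a))!) * n.descFactorial h := by
          rw [hm]; ring
      _ = n ! := by
          rw [Nat.choose_mul_factorial_mul_factorial hle, Nat.factorial_mul_descFactorial hhn]
      _ = n.choose k * ((k - a)! * k.descFactorial a) *
            ((n - k - (h - a))! * (n - k).descFactorial (h - a)) := by
          rw [Nat.factorial_mul_descFactorial hak, Nat.factorial_mul_descFactorial (by omega),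
            Nat.choose_mul_factorial_mul_factorial hkn]
      _ = _ := by ring
  · rw [Nat.choose_eq_zero_of_lt hlt, zero_mul]
    rcases le_or_gt k n with hkn | hnk
    · rw [Nat.descFactorial_eq_zero_iff_lt.2 (show n - k < h - a by omega), mul_zero]
    · rw [Nat.choose_eq_zero_of_lt hnk, zero_mul, zero_mul]

lemma card_powersetCard_filter_card_inter {α : Type*} [DecidableEq α] (S T : Finset α)
    {i j : ℕ} (hji : j ≤ i) :
    #{Q ∈ powersetCard i S | #(Q ∩ T) = j} = (#(S ∩ T)).choose j * (#(S \ T)).choose (i - j) := by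
  rw [← card_powersetCard, ← card_powersetCard, ← card_product]
  refine card_nbij' (fun Q ↦ (Q ∩ T, Q \ T)) (fun p ↦ p.1 ∪ p.2) ?_ ?_ ?_ ?_
  · intro Q hQ
    simp only [coe_filter, mem_powersetCard, Set.mem_ofPred_eq] at hQ
    have hsplit := card_inter_add_card_sdiff Q T
    simp only [coe_product, Set.mem_prod, mem_coe, mem_powersetCard]
    exact ⟨⟨inter_subset_inter_right hQ.1.1, hQ.2⟩, sdiff_subset_sdiff hQ.1.1 le_rfl, by omega⟩
  · rintro ⟨A, B⟩ hAB
    simp only [coe_product, Set.mem_prod, mem_coe, mem_powersetCard] at hAB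
    obtain ⟨⟨hA, rfl⟩, hB, hBc⟩ := hAB
    have hdisj : Disjoint A B :=
      disjoint_of_subset_left (hA.trans inter_subset_right)
        (disjoint_of_subset_right hB disjoint_sdiff)
    have hinter : (A ∪ B) ∩ T = A := by grind
    simp only [coe_filter, mem_powersetCard, Set.mem_ofPred_eq, card_union_of_disjoint hdisj,
      hinter]
    refine ⟨⟨union_subset (hA.trans inter_subset_left) (hB.trans sdiff_subset), by omega⟩, trivial⟩
  · intro Q _
    exact sup_inf_sdiff Q T
  · rintro ⟨A, B⟩ hAB
    simp only [coe_product, Set.mem_prod, mem_coe, mem_powersetCard] at hAB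
    ext x <;> grind

lemma sum_range_sum_range_min_comm {M : Type*} [AddCommMonoid M] {h t : ℕ} (hht : h ≤ t)
    (f : ℕ → ℕ → M) :
    ∑ i ∈ range (t + 1), ∑ j ∈ range (min h i + 1), f i j
      = ∑ j ∈ range (h + 1), ∑ i ∈ range (t - j + 1), f (i + j) j := by
  rw [sum_comm' (t' := range (h + 1)) (s' := fun j ↦ Ico j (t + 1)) (fun i j ↦ by
    simp only [mem_range, mem_Ico]; omega)]
  refine sum_congr rfl fun j _ ↦ ?_
  rw [sum_Ico_eq_sum_range, show t + 1 - j = t - j + 1 by grind]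
  simp only [add_comm j]

lemma card_filter_card_inter_mul_descFactorial {α : Type*} [Fintype α] [DecidableEq α]
    (H : Finset α) {k a : ℕ} (ha : a ≤ #H) :
    #{I ∈ powersetCard k univ | #(I ∩ H) = a} * (Fintype.card α).descFactorial #H
      = (Fintype.card α).choose k * ((#H).choose a * (k.descFactorial a *
          (Fintype.card α - k).descFactorial (#H - a))) := by
  rcases le_or_gt a k with hak | hka
  · rw [card_powersetCard_filter_card_inter _ _ hak, univ_inter, ← compl_eq_univ_sdiff,
      card_compl, mul_assoc, choose_sub_mul_descFactorial ha (card_le_univ H) hak]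
    ring
  · rw [filter_false_of_mem fun I hI ↦ ?_, Nat.descFactorial_of_lt hka]
    · simp
    · have hle := card_le_card (inter_subset_left (s₁ := I) (s₂ := H))
      rw [mem_powersetCard_univ.1 hI] at hle
      omega

lemma cast_card_filter_card_inter_eq {n k h a : ℕ} (hk : k ≤ n) (ha : a ≤ h)
    (H : Finset (Fin n)) (hH : #H = h) :
    (#{I ∈ powersetCard k univ | #(I ∩ H) = a} : ℝ)
      = n.choose k * (h.choose a * (fallFac k a * fallFac (n - k) (h - a))) / fallFac n h := by
  have hcount := card_filter_card_inter_mul_descFactorial H (k := k) (hH ▸ ha)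
  rw [Fintype.card_fin, hH] at hcount
  have hhn : h ≤ n := hH ▸ (card_le_univ H).trans_eq (Fintype.card_fin n)
  rw [eq_div_iff (by simp [fallFac_natCast, Nat.descFactorial_eq_zero_iff_lt]; omega),
    ← Nat.cast_sub hk, fallFac_natCast, fallFac_natCast, fallFac_natCast]
  exact_mod_cast hcount

lemma sum_mul_zeta_eq_sum_powerset {n t : ℕ} (g : Finset (Fin n) → ℝ) (I : Finset (Fin n)) :
    ∑ J : Pidx n t, g J.1 * zeta n t I J = ∑ Q ∈ I.powerset with #Q ≤ t, g Q := by
  unfold zeta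
  rw [← sum_subtype (p := fun Q ↦ #Q ≤ t) {Q | #Q ≤ t} (by simp)
    (fun Q ↦ g Q * if Q ⊆ I then 1 else 0)]
  simp only [mul_ite, mul_one, mul_zero, ← sum_filter, filter_filter]
  congr 1
  ext Q
  simp [and_comm]

lemma sum_mul_zeta_eq_sum_choose_mul_pFun {n t h : ℕ} (hht : h ≤ t) {α : ℕ → ℕ → ℝ}
    {u : Pidx n t → ℝ} (H : Finset (Fin n))
    (hu : ∀ Q : Pidx n t, u Q = ∑ i ∈ range (t + 1), ∑ j ∈ range (min h i + 1),
      α i j * (if #Q.1 = i ∧ #(Q.1 ∩ H) = j then 1 else 0))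
    (I : Finset (Fin n)) :
    ∑ J : Pidx n t, u J * zeta n t I J
      = ∑ j ∈ range (h + 1), ((#(I ∩ H)).choose j : ℝ) * pFun α t j #(I \ H) := by
  calc ∑ J : Pidx n t, u J * zeta n t I J
      = ∑ Q ∈ I.powerset with #Q ≤ t, ∑ i ∈ range (t + 1), ∑ j ∈ range (min h i + 1),
          α i j * (if #Q = i ∧ #(Q ∩ H) = j then 1 else 0) := by
        rw [← sum_mul_zeta_eq_sum_powerset]
        simp only [hu]
    _ = ∑ i ∈ range (t + 1), ∑ j ∈ range (min h i + 1),
          α i j * #{Q ∈ powersetCard i I | #(Q ∩ H) = j} := by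
        rw [sum_comm]
        refine sum_congr rfl fun i _ ↦ ?_
        rw [sum_comm]
        refine sum_congr rfl fun j _ ↦ ?_
        rw [← mul_sum, sum_boole, filter_filter, powersetCard_eq_filter, filter_filter]
        congr 3
        grind
    _ = ∑ i ∈ range (t + 1), ∑ j ∈ range (min h i + 1),
          α i j * ((#(I ∩ H)).choose j * (#(I \ H)).choose (i - j) : ℕ) := by
        refine sum_congr rfl fun i _ ↦ sum_congr rfl fun j hj ↦ ?_
        rw [card_powersetCard_filter_card_inter _ _ (by grind)]
    _ = _ := by
        rw [sum_range_sum_range_min_comm hht]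
        refine sum_congr rfl fun j _ ↦ ?_
        simp only [pFun, genBinom_natCast, mul_sum, Nat.add_sub_cancel, Nat.cast_mul]
        exact sum_congr rfl fun i _ ↦ by ring

theorem stmt15_general (n t h : ℕ) (hht : h ≤ t) (htn : t ≤ n)
    (α : ℕ → ℕ → ℝ) (u : Pidx n t → ℝ)
    (hu : ∀ Q : Pidx n t, u Q =
      ∑ i ∈ Finset.range (t + 1), ∑ j ∈ Finset.range (min h i + 1),
        α i j * (if Q.1.card = i ∧
          (Q.1 ∩ Finset.univ.filter (fun x : Fin n => (x : ℕ) < h)).card = j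
          then 1 else 0)) :
    ∀ k : ℕ, k ≤ n →
      ∑ I ∈ Finset.univ.filter (fun I : Finset (Fin n) => I.card = k),
        (∑ J : Pidx n t, u J * zeta n t I J) ^ 2
      = (n.choose k : ℝ) * Gfun n t h α (k : ℝ) / fallFac (n : ℝ) h := by
  intro k hk
  set H : Finset (Fin n) := univ.filter fun x ↦ (x : ℕ) < h
  have hH : #H = h := by
    rw [Fin.card_filter_val_lt]
    omega
  set F : ℕ → ℝ := fun a ↦ (∑ j ∈ range (h + 1), (a.choose j : ℝ) * pFun α t j (k - a)) ^ 2
  calc ∑ I ∈ univ with #I = k, (∑ J : Pidx n t, u J * zeta n t I J) ^ 2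
      = ∑ I ∈ powersetCard k univ, F #(I ∩ H) := by
        rw [powersetCard_eq_filter, powerset_univ]
        refine sum_congr rfl fun I hI ↦ ?_
        have hsplit := card_sdiff_add_card_inter I H
        rw [(mem_filter.1 hI).2] at hsplit
        dsimp only [F]
        rw [sum_mul_zeta_eq_sum_choose_mul_pFun hht H hu I, ← hsplit, Nat.cast_add,
          add_sub_cancel_right]
    _ = ∑ a ∈ range (h + 1), #{I ∈ powersetCard k univ | #(I ∩ H) = a} * F a := by
        rw [← sum_fiberwise_of_maps_to' (t := range (h + 1)) fun I _ ↦
          mem_range_succ_iff.2 (hH ▸ card_le_card inter_subset_right)]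
        simp only [sum_const, nsmul_eq_mul]
    _ = _ := by
        rw [Gfun, mul_sum, sum_div]
        refine sum_congr rfl fun a ha ↦ ?_
        rw [cast_card_filter_card_inter_eq hk (mem_range_succ_iff.1 ha) H hH]
        ring

/-- for a structured vector `u = Σ_{i,j} α_{i,j} b_{i,j}` with
`H = {1,...,h}`, one has `Σ_{|I|=k} (u^⊤ Z_I)² = C(n,k) G_h(k) / n^{(h)}`. -/
theorem stmt15 (n t h : ℕ) (hn : 1 ≤ n) (hht : h ≤ t) (htn : t ≤ n)
    (α : ℕ → ℕ → ℝ) (u : Pidx n t → ℝ)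
    (hu : ∀ Q : Pidx n t, u Q =
      ∑ i ∈ Finset.range (t + 1), ∑ j ∈ Finset.range (min h i + 1),
        α i j * (if Q.1.card = i ∧
          (Q.1 ∩ Finset.univ.filter (fun x : Fin n => (x : ℕ) < h)).card = j
          then 1 else 0)) :
    ∀ k : ℕ, k ≤ n →
      ∑ I ∈ Finset.univ.filter (fun I : Finset (Fin n) => I.card = k),
        (∑ J : Pidx n t, u J * zeta n t I J) ^ 2
      = (n.choose k : ℝ) * Gfun n t h α (k : ℝ) / fallFac (n : ℝ) h :=
  stmt15_general n t h hht htn α u hu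
end

section
/- Let n ≥ 1, t ≥ 0 and h ≥ 0 be integers and let u ∈ ℝ^{P_t(N)}. Suppose that for every S ⊆ N with |S| < h one has Σ_{π ∈ Π_S} P_π u = 0. Then for every Q ⊆ N with |Q| ≤ h − 1 or |Q| ≥ n − h + 1, one has u^⊤ Z_Q = Σ_{J ⊆ Q, |J| ≤ t} u_J = 0. -/
/-- Action of a permutation `π` of the ground set on the index set `P_t(N)`. -/
def permIdx (n t : ℕ) (π : Equiv.Perm (Fin n)) (I : Pidx n t) : Pidx n t :=
  ⟨I.1.image π, by
    rw [Finset.card_image_of_injective _ π.injective]; exact I.2⟩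

/-!
If every permutation fixing `S` also fixes `Q`, then `u ↦ u^⊤ Z_Q` is invariant under the
stabilizer `Π_S`, so `|Π_S| · u^⊤ Z_Q = (Σ_{π ∈ Π_S} P_π u)^⊤ Z_Q = 0`. A small `Q` is its own
witness `S`; for a large `Q` take `S = N ∖ Q`, since `Π_Q = Π_{N∖Q}`.
-/

section PermImage

variable {α : Type*} [Fintype α] [DecidableEq α]

theorem Finset.image_perm_compl (π : Equiv.Perm α) (S : Finset α) :
    Sᶜ.image π = (S.image π)ᶜ := by
  ext x
  simp [← Equiv.eq_symm_apply]

theorem Finset.image_perm_compl_of_image_eq {π : Equiv.Perm α} {S : Finset α}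
    (h : S.image π = S) : Sᶜ.image π = Sᶜ := by
  rw [Finset.image_perm_compl, h]

theorem exists_card_lt_and_stabilizer_le {h : ℕ} {Q : Finset α}
    (hQ : Q.card < h ∨ Fintype.card α + 1 ≤ Q.card + h) :
    ∃ S : Finset α, S.card < h ∧ ∀ π : Equiv.Perm α, S.image π = S → Q.image π = Q := by
  rcases hQ with hsmall | hlarge
  · exact ⟨Q, hsmall, fun _ hπ => hπ⟩
  · refine ⟨Qᶜ, ?_, fun π hπ => ?_⟩
    · have := Q.card_le_univ
      rw [Finset.card_compl]
      omega
    · simpa using Finset.image_perm_compl_of_image_eq hπ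

end PermImage

section Zeta

variable {n t : ℕ}

theorem permIdx_injective (π : Equiv.Perm (Fin n)) : Function.Injective (permIdx n t π) :=
  fun _ _ hIJ => Subtype.ext (Finset.image_injective π.injective (congrArg Subtype.val hIJ))

theorem permIdx_subset_iff {π : Equiv.Perm (Fin n)} {Q : Finset (Fin n)} (hQ : Q.image π = Q)
    (J : Pidx n t) : (permIdx n t π J).1 ⊆ Q ↔ J.1 ⊆ Q := by
  conv_lhs => rw [← hQ]
  exact Finset.image_subset_image_iff π.injective

/-- The functional `u ↦ u^⊤ Z_Q`. -/
def zetaFunctional (Q : Finset (Fin n)) : (Pidx n t → ℝ) →ₗ[ℝ] ℝ :=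
  ∑ J with J.1 ⊆ Q, LinearMap.proj J

theorem zetaFunctional_apply (Q : Finset (Fin n)) (u : Pidx n t → ℝ) :
    zetaFunctional Q u = ∑ J, if J.1 ⊆ Q then u J else 0 := by
  simp [zetaFunctional, Finset.sum_filter, apply_ite (fun f : (Pidx n t → ℝ) →ₗ[ℝ] ℝ => f u)]

theorem zetaFunctional_comp_permIdx {π : Equiv.Perm (Fin n)} {Q : Finset (Fin n)}
    (hQ : Q.image π = Q) (u : Pidx n t → ℝ) :
    zetaFunctional Q (u ∘ permIdx n t π) = zetaFunctional Q u := by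
  simp only [zetaFunctional_apply, Function.comp_apply]
  refine Fintype.sum_bijective _ (permIdx_injective π).bijective_of_finite _ _ fun J => ?_
  simp only [permIdx_subset_iff hQ]

theorem zetaFunctional_eq_zero_of_sum_stabilizer_eq_zero {S Q : Finset (Fin n)}
    (hSQ : ∀ π : Equiv.Perm (Fin n), S.image π = S → Q.image π = Q) {u : Pidx n t → ℝ}
    (hu : (fun I : Pidx n t =>
        ∑ π ∈ Finset.univ.filter (fun π : Equiv.Perm (Fin n) => S.image ⇑π = S),
          u (permIdx n t π I)) = 0) :
    zetaFunctional Q u = 0 := by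
  set G := Finset.univ.filter (fun π : Equiv.Perm (Fin n) => S.image ⇑π = S)
  have hG : G.card ≠ 0 := Finset.card_ne_zero.mpr ⟨1, by simp [G]⟩
  have hsum : ∑ π ∈ G, u ∘ permIdx n t π = 0 := by
    ext I
    simpa [Finset.sum_apply] using congrFun hu I
  suffices G.card • zetaFunctional Q u = 0 by simpa [hG] using this
  calc G.card • zetaFunctional Q u
      = ∑ π ∈ G, zetaFunctional Q (u ∘ permIdx n t π) := by
        rw [← Finset.sum_const]
        refine Finset.sum_congr rfl fun π hπ => ?_
        exact (zetaFunctional_comp_permIdx (hSQ π (Finset.mem_filter.mp hπ).2) u).symm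
    _ = 0 := by rw [← map_sum, hsum, map_zero]

end Zeta

theorem stmt18_general (n t h : ℕ) (u : Pidx n t → ℝ)
    (hvanish : ∀ S : Finset (Fin n), S.card < h →
      (fun I : Pidx n t =>
        ∑ π ∈ Finset.univ.filter (fun π : Equiv.Perm (Fin n) => S.image ⇑π = S),
          u (permIdx n t π I)) = 0) :
    ∀ Q : Finset (Fin n), (Q.card < h ∨ n + 1 ≤ Q.card + h) →
      ∑ J : Pidx n t, (if J.1 ⊆ Q then u J else 0) = 0 := by
  intro Q hQ
  obtain ⟨S, hS, hSQ⟩ := exists_card_lt_and_stabilizer_le (α := Fin n) (by rwa [Fintype.card_fin])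
  rw [← zetaFunctional_apply]
  exact zetaFunctional_eq_zero_of_sum_stabilizer_eq_zero hSQ (hvanish S hS)

/-- if `Σ_{π ∈ Π_S} P_π u = 0` for every `S` with `|S| < h`, then
`u^⊤ Z_Q = Σ_{J ⊆ Q, |J| ≤ t} u_J = 0` for every `Q` with `|Q| ≤ h-1` or
`|Q| ≥ n-h+1`. -/
theorem stmt18 (n t h : ℕ) (hn : 1 ≤ n) (u : Pidx n t → ℝ)
    (hvanish : ∀ S : Finset (Fin n), S.card < h →
      (fun I : Pidx n t =>
        ∑ π ∈ Finset.univ.filter (fun π : Equiv.Perm (Fin n) => S.image ⇑π = S),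
          u (permIdx n t π I)) = 0) :
    ∀ Q : Finset (Fin n), (Q.card < h ∨ n + 1 ≤ Q.card + h) →
      ∑ J : Pidx n t, (if J.1 ⊆ Q then u J else 0) = 0 :=
  stmt18_general n t h u hvanish
end

section
/- Let n ≥ 0 and h ≥ 0 be integers and let f be a univariate real polynomial. Then the polynomial C(k) = Σ_{r=0}^{h} C(h,r) · f(r) · k^{(r)} · (n−k)^{(h−r)}, viewed as a polynomial in the variable k, has degree at most the degree of f. -/
/-!
The sum is linear in `f`, so it suffices to treat the falling factorials `f = x^{(m)}`, which
span the polynomials of degree at most `m`. For these, `C(h,r) r^{(m)} = h^{(m)} C(h-m, r-m)` and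
`k^{(r)} = k^{(m)} (k-m)^{(r-m)}`, so the Chu–Vandermonde identity collapses the sum to
`h^{(m)} (n-m)^{(h-m)} k^{(m)}`, a polynomial of degree `m` in `k`.
-/

open Polynomial Finset

theorem Nat.choose_mul_descFactorial {n k m : ℕ} (hmk : m ≤ k) :
    n.choose k * k.descFactorial m = n.descFactorial m * (n - m).choose (k - m) := by
  rw [Nat.descFactorial_eq_factorial_mul_choose, Nat.descFactorial_eq_factorial_mul_choose,
    mul_left_comm, Nat.choose_mul hmk, mul_assoc]

section FallingFactorials

variable {S : Type*} [CommRing S]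

theorem descPochhammer_eval_add (x y : S) (k : ℕ) :
    (descPochhammer S k).eval (x + y) = ∑ i ∈ range (k + 1),
      k.choose i * ((descPochhammer S i).eval x * (descPochhammer S (k - i)).eval y) := by
  have eval_eq_smeval (j : ℕ) (z : S) :
      (descPochhammer S j).eval z = (descPochhammer ℤ j).smeval z := by
    rw [← descPochhammer_map (Int.castRingHom S), eval_map, ← eval₂_smulOneHom_eq_smeval]
    congr 1
    exact Subsingleton.elim _ _
  simp only [eval_eq_smeval]
  rw [Ring.descPochhammer_smeval_add k (Commute.all x y)]
  exact Nat.sum_antidiagonal_eq_sum_range_succ (fun i j => (k.choose i : S) *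
    ((descPochhammer ℤ i).smeval x * (descPochhammer ℤ j).smeval y)) k

theorem descPochhammer_add_eval (x : S) (m s : ℕ) :
    (descPochhammer S (m + s)).eval x
      = (descPochhammer S m).eval x * (descPochhammer S s).eval (x - m) := by
  simp [← descPochhammer_mul]

theorem sum_choose_mul_descFactorial_mul_descPochhammer_eval (h m : ℕ) (x y : S) :
    ∑ r ∈ range (h + 1), ((h.choose r * r.descFactorial m : ℕ) : S)
        * ((descPochhammer S r).eval x * (descPochhammer S (h - r)).eval y)
      = h.descFactorial m
        * ((descPochhammer S m).eval x * (descPochhammer S (h - m)).eval (x + y - m)) := by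
  have low_terms : ∀ r < m, ((h.choose r * r.descFactorial m : ℕ) : S) = 0 := fun r hr => by
    simp [Nat.descFactorial_eq_zero_iff_lt.2 hr]
  rcases lt_or_ge h m with hhm | hmh
  · rw [Nat.descFactorial_eq_zero_iff_lt.2 hhm, Nat.cast_zero, zero_mul]
    exact sum_eq_zero fun r hr => by
      rw [low_terms r (by rw [mem_range] at hr; omega), zero_mul]
  obtain ⟨t, rfl⟩ := Nat.exists_eq_add_of_le hmh
  rw [show m + t + 1 = m + (t + 1) by omega, sum_range_add,
    sum_eq_zero fun r hr => by rw [low_terms r (mem_range.1 hr), zero_mul], zero_add,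
    Nat.add_sub_cancel_left, show x + y - m = (x - m) + y by ring, descPochhammer_eval_add,
    mul_sum, mul_sum]
  refine sum_congr rfl fun s _ => ?_
  rw [Nat.choose_mul_descFactorial (Nat.le_add_right m s), Nat.add_sub_cancel_left,
    Nat.add_sub_add_left, Nat.add_sub_cancel_left, descPochhammer_add_eval]
  push_cast
  ring

variable (R : Type*) [CommRing R] [Algebra R S]

/-- At `x = k`, `y = n - k` for naturals `k ≤ n`, this is `n^{(h)}` times the expectation of `f`
under the hypergeometric distribution of the number of marked items among `h` drawn from `n`,
`k` of which are marked. -/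
noncomputable def hypergeometricSum (h : ℕ) (x y : S) : R[X] →ₗ[R] S :=
  ∑ r ∈ range (h + 1), (leval (r : R)).smulRight
    ((h.choose r : S) * ((descPochhammer S r).eval x * (descPochhammer S (h - r)).eval y))

variable {R}

theorem hypergeometricSum_descPochhammer (h m : ℕ) (x y : S) :
    hypergeometricSum R h x y (descPochhammer R m) = h.descFactorial m
        * ((descPochhammer S m).eval x * (descPochhammer S (h - m)).eval (x + y - m)) := by
  rw [← sum_choose_mul_descFactorial_mul_descPochhammer_eval, hypergeometricSum]
  simp only [LinearMap.sum_apply, LinearMap.smulRight_apply, leval_apply,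
    descPochhammer_eval_eq_descFactorial]
  refine sum_congr rfl fun r _ => ?_
  rw [Nat.cast_smul_eq_nsmul, nsmul_eq_mul]
  push_cast
  ring

end FallingFactorials

section Degree

variable (R : Type*) [CommRing R] [IsDomain R]

noncomputable def descPochhammerSequence : Polynomial.Sequence R :=
  ⟨descPochhammer R, fun i => by
    rw [degree_eq_natDegree (monic_descPochhammer R i).ne_zero, descPochhammer_natDegree]⟩

variable {R}

theorem degreeLE_le_of_descPochhammer_mem {M : Submodule R R[X]} {d : ℕ}
    (hM : ∀ m ≤ d, descPochhammer R m ∈ M) : degreeLE R d ≤ M := by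
  rw [← (descPochhammerSequence R).span_degreeLE fun i _ => by
    simp [descPochhammerSequence, (monic_descPochhammer R i).leadingCoeff]]
  exact Submodule.span_le.2 fun _ ⟨m, hm, hmp⟩ => hmp ▸ hM m hm

theorem natDegree_hypergeometricSum_le (h : ℕ) (b : R) (f : R[X]) :
    (hypergeometricSum R h X (C b - X) f).natDegree ≤ f.natDegree := by
  have preserves_degreeLE : degreeLE R f.natDegree
      ≤ (degreeLE R f.natDegree).comap (hypergeometricSum R h X (C b - X)) := by
    refine degreeLE_le_of_descPochhammer_mem fun m hm => ?_
    have eval_X : eval X (descPochhammer R[X] m) = descPochhammer R m := by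
      rw [← descPochhammer_map C, eval_map, eval₂_C_X]
    have sum_eq_C : X + (C b - X) - (m : R[X]) = C (b - m) := by
      rw [add_sub_cancel, map_sub, map_natCast]
    rw [Submodule.mem_comap, hypergeometricSum_descPochhammer, eval_X, sum_eq_C,
      ← descPochhammer_map C, eval_map, eval₂_at_apply, ← map_natCast C, mul_left_comm,
      ← map_mul, mem_degreeLE, ← natDegree_le_iff_degree_le]
    exact (natDegree_mul_C_le _ _).trans ((descPochhammer_natDegree R m).trans_le hm)
  exact natDegree_le_iff_degree_le.2
    (mem_degreeLE.1 (preserves_degreeLE (mem_degreeLE.2 degree_le_natDegree)))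

end Degree

/-- the polynomial `C(k) = Σ_{r=0}^h C(h,r) f(r) k^{(r)} (n-k)^{(h-r)}`
has degree (in `k`) at most the degree of `f`. -/
theorem stmt19 (n h : ℕ) (f : Polynomial ℝ) :
    (∑ r ∈ Finset.range (h + 1),
        Polynomial.C ((h.choose r : ℝ) * f.eval (r : ℝ)) *
          (∏ i ∈ Finset.range r, (Polynomial.X - Polynomial.C (i : ℝ))) *
          (∏ i ∈ Finset.range (h - r),
            (Polynomial.C (n : ℝ) - Polynomial.X - Polynomial.C (i : ℝ)))).natDegree
      ≤ f.natDegree := by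
  refine (congrArg natDegree ?_).trans_le (natDegree_hypergeometricSum_le h (n : ℝ) f)
  simp only [hypergeometricSum, LinearMap.sum_apply, LinearMap.smulRight_apply, leval_apply,
    descPochhammer_eval_eq_prod_range, smul_eq_C_mul]
  refine sum_congr rfl fun r _ => ?_
  simp only [map_mul, map_natCast]
  ring
end
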